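/- arXiv:1912.13338 — 3 statements merged into one kernel-verified Lean document; each statement's English description precedes it below -/
import Mathlib

section
/- Let p be an odd prime with p not divisible by 3. Then 2·∑_{0<x<p, x odd} ∑_{0<r, r ∣ p²−x²} χ(r) equals (p−1)/3 if p ≡ 1 (mod 3), and equals (p+1)/3 if p ≡ 2 (mod 3). Here the inner sum runs over the positive divisors r of p² − x². -/
/-- The Kronecker symbol `(−3/·)` on positive integers: `χ(r) = 1` if `r ≡ 1 (mod 3)`,
`χ(r) = −1` if `r ≡ 2 (mod 3)`, and `χ(r) = 0` if `3 ∣ r`. -/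
def kroneckerNegThree (r : ℕ) : ℤ :=
  if r % 3 = 1 then 1 else if r % 3 = 2 then -1 else 0

/-!
Put `G n = ∑_{r ∣ n} χ r`; it is multiplicative, and `G (4 m) = G m` because `χ 2 = -1`.
Writing `x = p - 2u`, the odd `x` and their reflections `u ↦ p - u` turn twice the sum into
`∑_{0<u<p} G (4u(p - u)) = ∑_{0<u<p} G u · G (p - u) = ∑_{ab + cd = p} χ a · χ c`.
Since `χ a · χ c = [3 ∣ a + 2c] - [3 ∣ a + c]`, the Liouville-type bijection
`(a, b, c, d) ↦ (a + c, b, c, d - b)` (if `b < d`) or `(a, b - d, c + a, d)` (if `d < b`)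
between the solutions with `b ≠ d` and those with `a ≠ c` cancels all but the diagonal terms.
For prime `p` these are `(p - c, 1, c, 1)`, contributing `#{0 < c < p | 3 ∣ p + c}`, and
`(1, b, 1, d)`, contributing nothing.
-/

open Finset ArithmeticFunction
open scoped ArithmeticFunction.zeta

theorem kroneckerNegThree_mul (m n : ℕ) :
    kroneckerNegThree (m * n) = kroneckerNegThree m * kroneckerNegThree n := by
  have hm : m % 3 = 0 ∨ m % 3 = 1 ∨ m % 3 = 2 := by omega
  have hn : n % 3 = 0 ∨ n % 3 = 1 ∨ n % 3 = 2 := by omega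
  rcases hm with hm | hm | hm <;> rcases hn with hn | hn | hn <;>
    simp [kroneckerNegThree, Nat.mul_mod, hm, hn]

theorem kroneckerNegThree_two_pow (k : ℕ) : kroneckerNegThree (2 ^ k) = (-1) ^ k := by
  induction k with
  | zero => rfl
  | succ k ih => rw [pow_succ, kroneckerNegThree_mul, ih, pow_succ]; rfl

theorem kroneckerNegThree_mul_eq_ite_sub_ite (a c : ℕ) :
    kroneckerNegThree a * kroneckerNegThree c =
      (if 3 ∣ a + 2 * c then 1 else 0) - (if 3 ∣ a + c then 1 else 0) := by
  have ha : a % 3 = 0 ∨ a % 3 = 1 ∨ a % 3 = 2 := by omega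
  have hc : c % 3 = 0 ∨ c % 3 = 1 ∨ c % 3 = 2 := by omega
  have h1 : 3 ∣ a + 2 * c ↔ (a % 3 + 2 * (c % 3)) % 3 = 0 := by omega
  have h2 : 3 ∣ a + c ↔ (a % 3 + c % 3) % 3 = 0 := by omega
  rcases ha with ha | ha | ha <;> rcases hc with hc | hc | hc <;>
    simp [kroneckerNegThree, ha, hc, h1, h2]

def kroneckerNegThreeArith : ArithmeticFunction ℤ := ⟨kroneckerNegThree, rfl⟩

theorem isMultiplicative_kroneckerNegThreeArith : kroneckerNegThreeArith.IsMultiplicative :=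
  ⟨rfl, fun _ => kroneckerNegThree_mul _ _⟩

def kroneckerDivisorSum (n : ℕ) : ℤ := ∑ r ∈ n.divisors, kroneckerNegThree r

theorem kroneckerDivisorSum_mul_of_coprime {m n : ℕ} (h : m.Coprime n) :
    kroneckerDivisorSum (m * n) = kroneckerDivisorSum m * kroneckerDivisorSum n := by
  have := (isMultiplicative_zeta.natCast.mul
    isMultiplicative_kroneckerNegThreeArith).map_mul_of_coprime h
  rwa [coe_zeta_mul_apply, coe_zeta_mul_apply, coe_zeta_mul_apply] at this

theorem kroneckerDivisorSum_two_pow_add_two (k : ℕ) :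
    kroneckerDivisorSum (2 ^ (k + 2)) = kroneckerDivisorSum (2 ^ k) := by
  rw [kroneckerDivisorSum, kroneckerDivisorSum, Nat.sum_divisors_prime_pow Nat.prime_two,
    Nat.sum_divisors_prime_pow Nat.prime_two, sum_range_succ _ (k + 2), sum_range_succ _ (k + 1),
    kroneckerNegThree_two_pow, kroneckerNegThree_two_pow]
  ring

theorem kroneckerDivisorSum_four_mul {m : ℕ} (hm : m ≠ 0) :
    kroneckerDivisorSum (4 * m) = kroneckerDivisorSum m := by
  obtain ⟨k, w, hw, rfl⟩ := Nat.exists_eq_two_pow_mul_odd hm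
  have hcop (j : ℕ) : Nat.Coprime (2 ^ j) w := (Nat.coprime_two_left.2 hw).pow_left j
  rw [show 4 * (2 ^ k * w) = 2 ^ (k + 2) * w by ring, kroneckerDivisorSum_mul_of_coprime (hcop _),
    kroneckerDivisorSum_mul_of_coprime (hcop _), kroneckerDivisorSum_two_pow_add_two]

theorem kroneckerDivisorSum_four_mul_mul_sub {p u : ℕ} (hp : p.Prime) (hu : u ∈ Ioo 0 p) :
    kroneckerDivisorSum (4 * (u * (p - u))) =
      kroneckerDivisorSum u * kroneckerDivisorSum (p - u) := by
  rw [mem_Ioo] at hu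
  have hcop : u.Coprime (p - u) := (Nat.coprime_sub_self_right hu.2.le).2
    (hp.coprime_iff_not_dvd.2 (Nat.not_dvd_of_pos_of_lt hu.1 hu.2)).symm
  rw [kroneckerDivisorSum_four_mul (Nat.mul_ne_zero (by omega) (by omega)),
    kroneckerDivisorSum_mul_of_coprime hcop]

theorem sum_Ioo_eq_two_nsmul_sum_filter_two_mul_lt {M : Type*} [AddCommMonoid M] {n : ℕ}
    (hn : Odd n) {g : ℕ → M} (hg : ∀ u ≤ n, g (n - u) = g u) :
    ∑ u ∈ Ioo 0 n, g u = 2 • ∑ u ∈ Ioo 0 n with 2 * u < n, g u := by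
  rw [← sum_filter_add_sum_filter_not (Ioo 0 n) (fun u => 2 * u < n), two_nsmul]
  congr 1
  obtain ⟨k, rfl⟩ := hn
  refine sum_nbij' (fun u => 2 * k + 1 - u) (fun u => 2 * k + 1 - u) ?_ ?_ ?_ ?_ ?_
  all_goals intro u hu; simp only [mem_filter, mem_Ioo] at hu ⊢
  · omega
  · omega
  · omega
  · omega
  · exact (hg u (by omega)).symm

theorem sum_filter_two_mul_lt_eq_sum_odd {M : Type*} [AddCommMonoid M] {n : ℕ} (hn : Odd n)
    (f : ℕ → M) :
    ∑ u ∈ Ioo 0 n with 2 * u < n, f (4 * (u * (n - u))) =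
      ∑ x ∈ Ioo 0 n with Odd x, f (n ^ 2 - x ^ 2) := by
  obtain ⟨k, rfl⟩ := hn
  refine sum_nbij' (fun u => 2 * k + 1 - 2 * u) (fun x => (2 * k + 1 - x) / 2) ?_ ?_ ?_ ?_ ?_
  all_goals intro u hu; simp only [mem_filter, mem_Ioo, Nat.odd_iff] at hu ⊢
  · omega
  · omega
  · omega
  · omega
  · obtain ⟨j, hj⟩ : ∃ j, 2 * k + 1 = 2 * u + j := ⟨2 * k + 1 - 2 * u, by omega⟩
    rw [hj, show 2 * u + j - u = u + j by omega, show 2 * u + j - 2 * u = j by omega]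
    congr 1
    rw [show (2 * u + j) ^ 2 = j ^ 2 + 4 * (u * (u + j)) by ring]
    omega

def mulAddMulReps (n : ℕ) : Finset ((ℕ × ℕ) × (ℕ × ℕ)) :=
  (Ioo 0 n).biUnion fun u => u.divisorsAntidiagonal ×ˢ (n - u).divisorsAntidiagonal

theorem mem_mulAddMulReps {n a b c d : ℕ} :
    ((a, b), (c, d)) ∈ mulAddMulReps n ↔
      0 < a ∧ 0 < b ∧ 0 < c ∧ 0 < d ∧ a * b + c * d = n := by
  simp only [mulAddMulReps, mem_biUnion, mem_product, mem_Ioo, Nat.mem_divisorsAntidiagonal]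
  constructor
  · rintro ⟨u, ⟨hu0, hun⟩, ⟨rfl, hab⟩, hcd, -⟩
    simp only [Nat.mul_ne_zero_iff] at hab
    have : c * d ≠ 0 := by omega
    simp only [Nat.mul_ne_zero_iff] at this
    omega
  · rintro ⟨ha, hb, hc, hd, h⟩
    have := Nat.mul_pos ha hb
    have := Nat.mul_pos hc hd
    exact ⟨a * b, ⟨by omega, by omega⟩, ⟨rfl, by omega⟩, by omega, by omega⟩

theorem sum_kroneckerDivisorSum_mul_eq_sum_mulAddMulReps (n : ℕ) :
    ∑ u ∈ Ioo 0 n, kroneckerDivisorSum u * kroneckerDivisorSum (n - u) =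
      ∑ q ∈ mulAddMulReps n, kroneckerNegThree q.1.1 * kroneckerNegThree q.2.1 := by
  have hdisj : (Ioo 0 n : Set ℕ).PairwiseDisjoint
      fun u => u.divisorsAntidiagonal ×ˢ (n - u).divisorsAntidiagonal := by
    intro u _ v _ huv
    simp only [Function.onFun, disjoint_left, mem_product, Nat.mem_divisorsAntidiagonal]
    rintro q ⟨⟨rfl, -⟩, -⟩ ⟨⟨h, -⟩, -⟩
    exact huv h
  rw [mulAddMulReps, sum_biUnion hdisj]
  refine sum_congr rfl fun u _ => ?_
  rw [kroneckerDivisorSum, kroneckerDivisorSum,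
    ← Nat.sum_divisorsAntidiagonal fun a _ => kroneckerNegThree a,
    ← Nat.sum_divisorsAntidiagonal fun a _ => kroneckerNegThree a, sum_mul_sum, sum_product]

def reduceBD : (ℕ × ℕ) × (ℕ × ℕ) → (ℕ × ℕ) × (ℕ × ℕ)
  | ((a, b), (c, d)) => if b < d then ((a + c, b), (c, d - b)) else ((a, b - d), (c + a, d))

def reduceAC : (ℕ × ℕ) × (ℕ × ℕ) → (ℕ × ℕ) × (ℕ × ℕ)
  | ((a, b), (c, d)) => if c < a then ((a - c, b), (c, d + b)) else ((a, b + d), (c - a, d))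

theorem reduceBD_mem {n : ℕ} {q : (ℕ × ℕ) × (ℕ × ℕ)} (hq : q ∈ mulAddMulReps n)
    (hbd : q.1.2 ≠ q.2.2) :
    reduceBD q ∈ mulAddMulReps n ∧ (reduceBD q).1.1 ≠ (reduceBD q).2.1 := by
  obtain ⟨⟨a, b⟩, ⟨c, d⟩⟩ := q
  obtain ⟨ha, hb, hc, hd, h⟩ := mem_mulAddMulReps.1 hq
  dsimp only at hbd
  simp only [reduceBD]
  split_ifs with hlt <;> dsimp only
  · obtain ⟨e, rfl⟩ : ∃ e, d = b + e := ⟨d - b, by omega⟩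
    refine ⟨mem_mulAddMulReps.2 ⟨by omega, hb, hc, by omega, ?_⟩, by omega⟩
    rw [Nat.add_sub_cancel_left, ← h]
    ring
  · obtain ⟨e, rfl⟩ : ∃ e, b = d + e := ⟨b - d, by omega⟩
    refine ⟨mem_mulAddMulReps.2 ⟨ha, by omega, by omega, hd, ?_⟩, by omega⟩
    rw [Nat.add_sub_cancel_left, ← h]
    ring

theorem reduceAC_mem {n : ℕ} {q : (ℕ × ℕ) × (ℕ × ℕ)} (hq : q ∈ mulAddMulReps n)
    (hac : q.1.1 ≠ q.2.1) :
    reduceAC q ∈ mulAddMulReps n ∧ (reduceAC q).1.2 ≠ (reduceAC q).2.2 := by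
  obtain ⟨⟨a, b⟩, ⟨c, d⟩⟩ := q
  obtain ⟨ha, hb, hc, hd, h⟩ := mem_mulAddMulReps.1 hq
  dsimp only at hac
  simp only [reduceAC]
  split_ifs with hlt <;> dsimp only
  · obtain ⟨e, rfl⟩ : ∃ e, a = c + e := ⟨a - c, by omega⟩
    refine ⟨mem_mulAddMulReps.2 ⟨by omega, hb, hc, by omega, ?_⟩, by omega⟩
    rw [Nat.add_sub_cancel_left, ← h]
    ring
  · obtain ⟨e, rfl⟩ : ∃ e, c = a + e := ⟨c - a, by omega⟩
    refine ⟨mem_mulAddMulReps.2 ⟨ha, by omega, by omega, hd, ?_⟩, by omega⟩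
    rw [Nat.add_sub_cancel_left, ← h]
    ring

theorem reduceAC_reduceBD {n : ℕ} {q : (ℕ × ℕ) × (ℕ × ℕ)}
    (hq : q ∈ mulAddMulReps n) :
    reduceAC (reduceBD q) = q := by
  obtain ⟨⟨a, b⟩, ⟨c, d⟩⟩ := q
  obtain ⟨ha, -, hc, -, -⟩ := mem_mulAddMulReps.1 hq
  simp only [reduceBD]
  split_ifs with hlt
  · simp only [reduceAC, if_pos (show c < a + c by omega), Prod.mk.injEq, and_true,
      true_and]
    omega
  · simp only [reduceAC, if_neg (show ¬c + a < a by omega), Prod.mk.injEq, and_true,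
      true_and]
    omega

theorem reduceBD_reduceAC {n : ℕ} {q : (ℕ × ℕ) × (ℕ × ℕ)}
    (hq : q ∈ mulAddMulReps n) :
    reduceBD (reduceAC q) = q := by
  obtain ⟨⟨a, b⟩, ⟨c, d⟩⟩ := q
  obtain ⟨-, hb, -, hd, -⟩ := mem_mulAddMulReps.1 hq
  simp only [reduceAC]
  split_ifs with hlt
  · simp only [reduceBD, if_pos (show b < d + b by omega), Prod.mk.injEq, and_true,
      true_and]
    omega
  · simp only [reduceBD, if_neg (show ¬b + d < d by omega), Prod.mk.injEq, and_true,
      true_and]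
    omega

theorem three_dvd_reduceBD_iff (q : (ℕ × ℕ) × (ℕ × ℕ)) :
    3 ∣ (reduceBD q).1.1 + (reduceBD q).2.1 ↔ 3 ∣ q.1.1 + 2 * q.2.1 := by
  obtain ⟨⟨a, b⟩, ⟨c, d⟩⟩ := q
  simp only [reduceBD]
  split_ifs <;> dsimp only <;> omega

theorem card_filter_three_dvd_add_two_mul_ne {n : ℕ} :
    #{q ∈ mulAddMulReps n | 3 ∣ q.1.1 + 2 * q.2.1 ∧ q.1.2 ≠ q.2.2} =
      #{q ∈ mulAddMulReps n | 3 ∣ q.1.1 + q.2.1 ∧ q.1.1 ≠ q.2.1} := by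
  refine card_nbij' reduceBD reduceAC ?_ ?_ ?_ ?_
  · intro q hq
    simp only [coe_filter, Set.mem_ofPred_eq] at hq ⊢
    obtain ⟨hmem, hne⟩ := reduceBD_mem hq.1 hq.2.2
    exact ⟨hmem, (three_dvd_reduceBD_iff q).2 hq.2.1, hne⟩
  · intro q hq
    simp only [coe_filter, Set.mem_ofPred_eq] at hq ⊢
    obtain ⟨hmem, hne⟩ := reduceAC_mem hq.1 hq.2.2
    refine ⟨hmem, ?_, hne⟩
    rw [← three_dvd_reduceBD_iff, reduceBD_reduceAC hq.1]
    exact hq.2.1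
  · intro q hq
    simp only [coe_filter, Set.mem_ofPred_eq] at hq
    exact reduceAC_reduceBD hq.1
  · intro q hq
    simp only [coe_filter, Set.mem_ofPred_eq] at hq
    exact reduceBD_reduceAC hq.1

theorem Nat.Ioc_filter_dvd_card_eq_div_sub_div (k : ℕ) {m n : ℕ} (h : m ≤ n) :
    #{x ∈ Ioc m n | k ∣ x} = n / k - m / k := by
  rw [← Nat.Ioc_filter_dvd_card_eq_div n, ← Nat.Ioc_filter_dvd_card_eq_div m,
    ← Ioc_union_Ioc_eq_Ioc (Nat.zero_le m) h, filter_union,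
    card_union_of_disjoint (disjoint_filter_filter (Ioc_disjoint_Ioc_of_le le_rfl))]
  omega

theorem Nat.Ioo_filter_dvd_add_card_eq (k n : ℕ) :
    #{c ∈ Ioo 0 n | k ∣ n + c} = (2 * n - 1) / k - n / k := by
  rw [← Nat.Ioc_filter_dvd_card_eq_div_sub_div k (by omega)]
  refine card_nbij' (n + ·) (· - n) ?_ ?_ ?_ ?_
  all_goals
    intro c hc
    simp only [coe_filter, mem_Ioo, mem_Ioc, Set.mem_ofPred_eq] at hc ⊢
  · omega
  · exact ⟨by omega, by rw [Nat.add_sub_cancel' (by omega)]; exact hc.2⟩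
  · omega
  · omega

theorem eq_one_and_add_eq_of_mem_mulAddMulReps {p a b c : ℕ} (hp : p.Prime)
    (hq : ((a, b), (c, b)) ∈ mulAddMulReps p) : b = 1 ∧ a + c = p := by
  obtain ⟨ha, -, hc, -, h⟩ := mem_mulAddMulReps.1 hq
  rw [show a * b + c * b = (a + c) * b by ring] at h
  rcases Nat.prime_mul_iff.1 (h ▸ hp) with ⟨-, rfl⟩ | ⟨-, h1⟩
  · simpa using h
  · omega

theorem card_filter_three_dvd_add_two_mul_eq {p : ℕ} (hp : p.Prime) :
    #{q ∈ mulAddMulReps p | 3 ∣ q.1.1 + 2 * q.2.1 ∧ q.1.2 = q.2.2} =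
      #{c ∈ Ioo 0 p | 3 ∣ p + c} := by
  refine card_nbij' (fun q => q.2.1) (fun c => ((p - c, 1), (c, 1))) ?_ ?_ ?_ ?_
  · rintro ⟨⟨a, b⟩, ⟨c, d⟩⟩ hq
    simp only [coe_filter, mem_Ioo, Set.mem_ofPred_eq] at hq ⊢
    obtain ⟨hmem, h3, rfl⟩ := hq
    obtain ⟨-, hac⟩ := eq_one_and_add_eq_of_mem_mulAddMulReps hp hmem
    obtain ⟨ha, -, hc, -⟩ := mem_mulAddMulReps.1 hmem
    omega
  · intro c hc
    simp only [coe_filter, mem_Ioo, Set.mem_ofPred_eq, mem_mulAddMulReps, mul_one,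
      and_true] at hc ⊢
    omega
  · rintro ⟨⟨a, b⟩, ⟨c, d⟩⟩ hq
    simp only [coe_filter, Set.mem_ofPred_eq] at hq
    obtain ⟨hmem, -, rfl⟩ := hq
    obtain ⟨rfl, hac⟩ := eq_one_and_add_eq_of_mem_mulAddMulReps hp hmem
    simp only [Prod.mk.injEq, and_true]
    omega
  · intro c _
    rfl

theorem card_filter_three_dvd_add_eq {p : ℕ} (hp : p.Prime) :
    #{q ∈ mulAddMulReps p | 3 ∣ q.1.1 + q.2.1 ∧ q.1.1 = q.2.1} = 0 := by
  rw [card_eq_zero, filter_eq_empty_iff]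
  rintro ⟨⟨a, b⟩, ⟨c, d⟩⟩ hq ⟨h3 : 3 ∣ a + c, hac : a = c⟩
  subst hac
  obtain ⟨ha, hb, -, hd, h⟩ := mem_mulAddMulReps.1 hq
  rw [show a * b + a * d = a * (b + d) by ring] at h
  rcases Nat.prime_mul_iff.1 (h ▸ hp) with ⟨-, h1⟩ | ⟨-, rfl⟩ <;> omega

theorem sum_kroneckerNegThree_mul_mulAddMulReps {p : ℕ} (hp : p.Prime) :
    ∑ q ∈ mulAddMulReps p, kroneckerNegThree q.1.1 * kroneckerNegThree q.2.1 =
      ((2 * p - 1) / 3 - p / 3 : ℕ) := by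
  simp only [kroneckerNegThree_mul_eq_ite_sub_ite, sum_sub_distrib, sum_boole]
  rw [← card_filter_add_card_filter_not (s := {q ∈ mulAddMulReps p | 3 ∣ q.1.1 + 2 * q.2.1})
      fun q => q.1.2 = q.2.2,
    ← card_filter_add_card_filter_not (s := {q ∈ mulAddMulReps p | 3 ∣ q.1.1 + q.2.1})
      fun q => q.1.1 = q.2.1]
  simp only [filter_filter]
  rw [card_filter_three_dvd_add_two_mul_eq hp, card_filter_three_dvd_add_eq hp,
    card_filter_three_dvd_add_two_mul_ne, Nat.Ioo_filter_dvd_add_card_eq]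
  push_cast
  ring

theorem sum_kronecker_odd_general (p : ℕ) (hp : p.Prime) (hodd : Odd p) :
    (p % 3 = 1 →
      2 * ∑ x ∈ (Finset.Ioo 0 p).filter (fun x => Odd x),
        ∑ r ∈ (p ^ 2 - x ^ 2).divisors, kroneckerNegThree r = ((p : ℤ) - 1) / 3) ∧
    (p % 3 = 2 →
      2 * ∑ x ∈ (Finset.Ioo 0 p).filter (fun x => Odd x),
        ∑ r ∈ (p ^ 2 - x ^ 2).divisors, kroneckerNegThree r = ((p : ℤ) + 1) / 3) := by
  have key : 2 * ∑ x ∈ (Ioo 0 p).filter (fun x => Odd x),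
      ∑ r ∈ (p ^ 2 - x ^ 2).divisors, kroneckerNegThree r = ((2 * p - 1) / 3 - p / 3 : ℕ) :=
    calc _ = ∑ u ∈ Ioo 0 p, kroneckerDivisorSum (4 * (u * (p - u))) := by
          rw [sum_Ioo_eq_two_nsmul_sum_filter_two_mul_lt hodd, nsmul_eq_mul,
            sum_filter_two_mul_lt_eq_sum_odd hodd]
          · rfl
          · intro u hu
            rw [Nat.sub_sub_self hu, mul_comm u]
      _ = ∑ u ∈ Ioo 0 p, kroneckerDivisorSum u * kroneckerDivisorSum (p - u) :=
          sum_congr rfl fun u hu => kroneckerDivisorSum_four_mul_mul_sub hp hu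
      _ = ∑ q ∈ mulAddMulReps p, kroneckerNegThree q.1.1 * kroneckerNegThree q.2.1 :=
          sum_kroneckerDivisorSum_mul_eq_sum_mulAddMulReps p
      _ = _ := sum_kroneckerNegThree_mul_mulAddMulReps hp
  constructor <;> intro h <;> rw [key] <;> omega

/-- Let `p` be an odd prime not divisible by `3`.  Then
`2·∑_{0<x<p, x odd} ∑_{0<r ∣ p²−x²} χ(r)` equals `(p−1)/3` if `p ≡ 1 (mod 3)` and
`(p+1)/3` if `p ≡ 2 (mod 3)`. -/
theorem sum_kronecker_odd (p : ℕ) (hp : p.Prime) (hodd : Odd p) (h3 : ¬ 3 ∣ p) :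
    (p % 3 = 1 →
      2 * ∑ x ∈ (Finset.Ioo 0 p).filter (fun x => Odd x),
        ∑ r ∈ (p ^ 2 - x ^ 2).divisors, kroneckerNegThree r = ((p : ℤ) - 1) / 3) ∧
    (p % 3 = 2 →
      2 * ∑ x ∈ (Finset.Ioo 0 p).filter (fun x => Odd x),
        ∑ r ∈ (p ^ 2 - x ^ 2).divisors, kroneckerNegThree r = ((p : ℤ) + 1) / 3) :=
  sum_kronecker_odd_general p hp hodd
end

section
/- For every positive integer n, R(n) + 3·∑_{k=1}^{n−1} R(k)·R(n−k) = σ(n) − 3·σ₃(n), where σ(n) is the sum of the positive divisors of n, and σ₃(n) = σ(n/3) if 3 divides n and σ₃(n) = 0 otherwise. -/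
/-- `R(n) = ∑_{0<d ∣ n} χ(d)`. -/
def RR (n : ℕ) : ℤ := ∑ d ∈ n.divisors, kroneckerNegThree d

/-- `σ(n)`, the sum of the positive divisors of `n`. -/
def sigma' (n : ℕ) : ℤ := ∑ d ∈ n.divisors, (d : ℤ)

/-!
Expanding `R(k) R(n - k)` turns the convolution into `∑ χ(a) χ(b)` over the quadruples
`(a, x, b, y)` of positive integers with `a x + b y = n`, and `χ(a) χ(b) = [3 ∣ a + 2b] - [3 ∣ a + b]`.
Liouville's bijection `(a, x, b, y) ↦ (a - b, x, b, x + y)` from `{b < a}` onto `{x < y}`, together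
with the symmetries `(a, x) ↔ (b, y)` and `(a, b) ↔ (x, y)`, reduces both weighted counts to sums over
the diagonals `a = b` and `x = y`, which are divisor sums of `n`. Against `R(n) = ∑_{d ∣ n} χ(d)`
what remains is an identity for each divisor, plus the substitution `d = 3e` for the divisors
divisible by `3`.
-/

open Finset

namespace ThetaSquareEisenstein

lemma sum_filter_lt_add_sum_filter_eq_add_sum_filter_gt {α β M : Type*} [LinearOrder β]
    [AddCommMonoid M] (s : Finset α) (u v : α → β) (f : α → M) :
    ∑ a ∈ s with u a < v a, f a + ∑ a ∈ s with u a = v a, f a + ∑ a ∈ s with v a < u a, f a =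
      ∑ a ∈ s, f a := by
  simp only [sum_filter, ← sum_add_distrib]
  refine sum_congr rfl fun a _ => ?_
  rcases lt_trichotomy (u a) (v a) with h | h | h
  · simp [h, h.ne, h.not_gt]
  · simp [h]
  · simp [h, h.ne', h.not_gt]

lemma sum_filter_comp_involutive {α M : Type*} [AddCommMonoid M] {s : Finset α} {e : α → α}
    (he : Function.Involutive e) (hs : ∀ a ∈ s, e a ∈ s) (p : α → Prop) [DecidablePred p]
    (f : α → M) : ∑ a ∈ s with p a, f a = ∑ a ∈ s with p (e a), f (e a) :=
  sum_nbij' e e (by simp +contextual [hs, he _]) (by simp +contextual [hs])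
    (fun a _ => he a) (fun a _ => he a) (fun a _ => by rw [he])

def ind3 (k : ℕ) : ℤ := if 3 ∣ k then 1 else 0

lemma ind3_congr {k l : ℕ} (h : 3 ∣ k ↔ 3 ∣ l) : ind3 k = ind3 l := by
  simp only [ind3, h]

lemma kroneckerNegThree_mul (a b : ℕ) :
    kroneckerNegThree a * kroneckerNegThree b = ind3 (a + 2 * b) - ind3 (a + b) := by
  unfold kroneckerNegThree ind3
  split_ifs <;> omega

lemma kroneckerNegThree_eq {d : ℕ} (hd : 0 < d) :
    kroneckerNegThree d = 3 + 6 * ((d - 1) / 3 : ℕ) + 3 * ind3 d - 2 * d := by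
  unfold kroneckerNegThree ind3
  split_ifs <;> omega

lemma sum_Ico_one_ind3 (m : ℕ) : ∑ x ∈ Ico 1 m, ind3 x = ((m - 1) / 3 : ℕ) := by
  have hIco : Ico 1 m = Ioc 0 (m - 1) := by ext; simp only [mem_Ico, mem_Ioc]; omega
  simp only [hIco, ← Nat.Ioc_filter_dvd_card_eq_div, ind3, sum_boole]

-- `((a, x), (b, y))` with `a x + b y = n`; the bounds by `n` only serve to make the set finite.
def quads (n : ℕ) : Finset ((ℕ × ℕ) × (ℕ × ℕ)) :=
  {q ∈ (Icc 1 n ×ˢ Icc 1 n) ×ˢ (Icc 1 n ×ˢ Icc 1 n) | q.1.1 * q.1.2 + q.2.1 * q.2.2 = n}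

@[simp]
lemma mem_quads {n a x b y : ℕ} :
    ((a, x), (b, y)) ∈ quads n ↔ a * x + b * y = n ∧ 0 < a ∧ 0 < x ∧ 0 < b ∧ 0 < y := by
  simp only [quads, mem_filter, mem_product, mem_Icc]
  constructor
  · rintro ⟨⟨⟨⟨ha, -⟩, hx, -⟩, ⟨hb, -⟩, hy, -⟩, h⟩
    exact ⟨h, ha, hx, hb, hy⟩
  · rintro ⟨h, ha, hx, hb, hy⟩
    refine ⟨⟨⟨⟨ha, ?_⟩, hx, ?_⟩, ⟨hb, ?_⟩, hy, ?_⟩, h⟩ <;> nlinarith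

lemma swap_mem_quads {n : ℕ} {q : (ℕ × ℕ) × (ℕ × ℕ)} (hq : q ∈ quads n) : q.swap ∈ quads n := by
  obtain ⟨⟨a, x⟩, b, y⟩ := q
  simp only [Prod.swap_prod_mk, mem_quads] at hq ⊢
  omega

lemma map_swap_swap_mem_quads {n : ℕ} {q : (ℕ × ℕ) × (ℕ × ℕ)} (hq : q ∈ quads n) :
    Prod.map Prod.swap Prod.swap q ∈ quads n := by
  obtain ⟨⟨a, x⟩, b, y⟩ := q
  simp only [Prod.map, Prod.swap_prod_mk, mem_quads] at hq ⊢
  refine ⟨?_, by omega⟩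
  rw [← hq.1]; ring

lemma sum_Ico_sum_divisors_mul_sum_divisors {R : Type*} [CommSemiring R] (n : ℕ) (f g : ℕ → R) :
    ∑ k ∈ Ico 1 n, (∑ d ∈ k.divisors, f d) * ∑ d ∈ (n - k).divisors, g d =
      ∑ q ∈ quads n, f q.1.1 * g q.2.1 := by
  simp only [← Nat.sum_divisorsAntidiagonal (fun d _ => f d),
    ← Nat.sum_divisorsAntidiagonal (fun d _ => g d), sum_mul_sum, ← sum_product']
  rw [← sum_fiberwise_of_maps_to (g := fun q : (ℕ × ℕ) × (ℕ × ℕ) => q.1.1 * q.1.2) (t := Ico 1 n)]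
  · refine sum_congr rfl fun k hk => sum_congr ?_ fun _ _ => rfl
    ext ⟨⟨a, x⟩, b, y⟩
    simp only [mem_Ico] at hk
    simp only [mem_product, Nat.mem_divisorsAntidiagonal, mem_filter, mem_quads]
    constructor
    · rintro ⟨⟨rfl, hax⟩, hby, hnk⟩
      rw [← hby] at hnk
      obtain ⟨ha, hx⟩ := mul_ne_zero_iff.1 hax
      obtain ⟨hb, hy⟩ := mul_ne_zero_iff.1 hnk
      exact ⟨⟨by omega, by omega, by omega, by omega, by omega⟩, rfl⟩
    · rintro ⟨⟨h, ha, hx, hb, hy⟩, rfl⟩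
      have := Nat.mul_pos hb hy
      exact ⟨⟨rfl, by positivity⟩, by omega, by omega⟩
  · rintro ⟨⟨a, x⟩, b, y⟩
    simp only [mem_quads, mem_Ico, and_imp]
    intro h ha hx hb hy
    have := Nat.mul_pos ha hx
    have := Nat.mul_pos hb hy
    omega

lemma sum_liouville_bijection {M : Type*} [AddCommMonoid M] (n : ℕ) (f : (ℕ × ℕ) × (ℕ × ℕ) → M) :
    ∑ q ∈ quads n with q.2.1 < q.1.1, f ((q.1.1 - q.2.1, q.1.2), (q.2.1, q.1.2 + q.2.2)) =
      ∑ q ∈ quads n with q.1.2 < q.2.2, f q := by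
  refine sum_nbij' (fun q => ((q.1.1 - q.2.1, q.1.2), (q.2.1, q.1.2 + q.2.2)))
    (fun q => ((q.1.1 + q.2.1, q.1.2), (q.2.1, q.2.2 - q.1.2))) ?_ ?_ ?_ ?_ (fun _ _ => rfl)
  · rintro ⟨⟨a, x⟩, b, y⟩
    simp only [mem_filter, mem_quads, and_imp]
    intro h ha hx hb hy hba
    obtain ⟨c, rfl⟩ := Nat.exists_eq_add_of_le hba.le
    refine ⟨⟨?_, by omega, hx, hb, by omega⟩, by omega⟩
    rw [← h, Nat.add_sub_cancel_left]; ring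
  · rintro ⟨⟨a, x⟩, b, y⟩
    simp only [mem_filter, mem_quads, and_imp]
    intro h ha hx hb hy hxy
    obtain ⟨c, rfl⟩ := Nat.exists_eq_add_of_le hxy.le
    refine ⟨⟨?_, by omega, hx, hb, by omega⟩, by omega⟩
    rw [← h, Nat.add_sub_cancel_left]; ring
  · rintro ⟨⟨a, x⟩, b, y⟩ hq
    simp only [mem_filter, mem_quads] at hq
    simp only [Prod.mk.injEq, and_true, true_and]
    omega
  · rintro ⟨⟨a, x⟩, b, y⟩ hq
    simp only [mem_filter, mem_quads] at hq
    simp only [Prod.mk.injEq, and_true, true_and]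
    omega

lemma sum_quads_filter_fst_eq_snd {M : Type*} [AddCommMonoid M] (n : ℕ)
    (f : (ℕ × ℕ) × (ℕ × ℕ) → M) :
    ∑ q ∈ quads n with q.1.1 = q.2.1, f q =
      ∑ d ∈ n.divisors, ∑ x ∈ Ico 1 (n / d), f ((d, x), (d, n / d - x)) := by
  have hdiv {a x y : ℕ} (ha : 0 < a) (h : a * x + a * y = n) : n / a = x + y :=
    Nat.div_eq_of_eq_mul_left ha (by rw [← h]; ring)
  rw [sum_sigma']
  refine sum_nbij' (fun q => ⟨q.1.1, q.1.2⟩) (fun p => ((p.1, p.2), (p.1, n / p.1 - p.2)))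
    ?_ ?_ ?_ (fun _ _ => rfl) ?_
  · rintro ⟨⟨a, x⟩, b, y⟩
    simp only [mem_filter, mem_quads, mem_sigma, Nat.mem_divisors, mem_Ico, and_imp]
    rintro h ha hx - hy rfl
    rw [hdiv ha h]
    exact ⟨⟨Dvd.intro _ (by rw [← h, mul_add]), by rw [← h]; positivity⟩, hx, by omega⟩
  · rintro ⟨d, x⟩
    simp only [mem_filter, mem_quads, mem_sigma, Nat.mem_divisors, mem_Ico, and_imp]
    rintro ⟨m, rfl⟩ hn hx hxm
    have hd : 0 < d := Nat.pos_of_ne_zero (left_ne_zero_of_mul hn)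
    rw [Nat.mul_div_cancel_left m hd] at hxm ⊢
    exact ⟨⟨by rw [← mul_add, Nat.add_sub_cancel' hxm.le], hd, hx, hd, by omega⟩, trivial⟩
  all_goals
    rintro ⟨⟨a, x⟩, b, y⟩
    simp only [mem_filter, mem_quads, and_imp]
    rintro h ha hx - hy rfl
    simp only [hdiv ha h, Nat.add_sub_cancel_left]

lemma sum_quads_filter_snd_eq_snd {M : Type*} [AddCommMonoid M] (n : ℕ)
    (f : (ℕ × ℕ) × (ℕ × ℕ) → M) :
    ∑ q ∈ quads n with q.1.2 = q.2.2, f q =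
      ∑ d ∈ n.divisors, ∑ x ∈ Ico 1 (n / d), f ((x, d), (n / d - x, d)) := by
  rw [sum_filter_comp_involutive (Function.Involutive.prodMap Prod.swap_swap Prod.swap_swap)
    (fun _ => map_swap_swap_mem_quads)]
  exact sum_quads_filter_fst_eq_snd n _

section Diagonal

variable (n : ℕ)

lemma sum_quads_filter_fst_eq_snd_ind3_add_two_mul :
    ∑ q ∈ quads n with q.1.1 = q.2.1, ind3 (q.1.1 + 2 * q.2.1) =
      ∑ d ∈ n.divisors, ((n / d - 1 : ℕ) : ℤ) := by
  rw [sum_quads_filter_fst_eq_snd]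
  refine sum_congr rfl fun d _ => ?_
  simp [ind3, show 3 ∣ d + 2 * d by omega]

lemma sum_quads_filter_fst_eq_snd_ind3 :
    ∑ q ∈ quads n with q.1.1 = q.2.1, ind3 q.1.1 =
      ∑ d ∈ n.divisors, ind3 d * ((n / d - 1 : ℕ) : ℤ) := by
  rw [sum_quads_filter_fst_eq_snd]
  refine sum_congr rfl fun d _ => ?_
  simp [mul_comm]

lemma sum_quads_filter_snd_eq_snd_ind3_add :
    ∑ q ∈ quads n with q.1.2 = q.2.2, ind3 (q.1.1 + q.2.1) =
      ∑ d ∈ n.divisors, ind3 d * ((d - 1 : ℕ) : ℤ) := by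
  rw [sum_quads_filter_snd_eq_snd, ← Nat.sum_div_divisors n (fun d => ind3 d * ((d - 1 : ℕ) : ℤ))]
  refine sum_congr rfl fun d _ => ?_
  rw [sum_congr rfl fun x hx => by rw [Nat.add_sub_cancel' (mem_Ico.1 hx).2.le]]
  simp [mul_comm]

lemma sum_quads_filter_snd_eq_snd_ind3 :
    ∑ q ∈ quads n with q.1.2 = q.2.2, ind3 q.1.1 =
      ∑ d ∈ n.divisors, (((d - 1) / 3 : ℕ) : ℤ) := by
  rw [sum_quads_filter_snd_eq_snd, ← Nat.sum_div_divisors n (fun d => (((d - 1) / 3 : ℕ) : ℤ))]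
  exact sum_congr rfl fun d _ => sum_Ico_one_ind3 _

end Diagonal

section Liouville

variable (n : ℕ)

lemma sum_quads_ind3_add_two_mul :
    ∑ q ∈ quads n, ind3 (q.1.1 + 2 * q.2.1) =
      2 * ∑ q ∈ quads n with q.1.2 < q.2.2, ind3 q.1.1 +
        ∑ q ∈ quads n with q.1.1 = q.2.1, ind3 (q.1.1 + 2 * q.2.1) := by
  have hgt : ∑ q ∈ quads n with q.2.1 < q.1.1, ind3 (q.1.1 + 2 * q.2.1) =
      ∑ q ∈ quads n with q.1.2 < q.2.2, ind3 q.1.1 := by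
    rw [← sum_liouville_bijection n (fun q => ind3 q.1.1)]
    refine sum_congr rfl fun q hq => ind3_congr ?_
    simp only [mem_filter] at hq
    dsimp only
    omega
  have hlt : ∑ q ∈ quads n with q.1.1 < q.2.1, ind3 (q.1.1 + 2 * q.2.1) =
      ∑ q ∈ quads n with q.1.2 < q.2.2, ind3 q.1.1 := by
    rw [sum_filter_comp_involutive Prod.swap_swap (fun _ => swap_mem_quads), ← hgt]
    exact sum_congr rfl fun q _ => ind3_congr (by simp only [Prod.fst_swap, Prod.snd_swap]; omega)
  rw [← sum_filter_lt_add_sum_filter_eq_add_sum_filter_gt _ (fun q => q.1.1) (fun q => q.2.1),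
    hlt, hgt]
  ring

lemma sum_quads_ind3_add :
    ∑ q ∈ quads n, ind3 (q.1.1 + q.2.1) =
      2 * ∑ q ∈ quads n with q.2.1 < q.1.1, ind3 q.1.1 +
        ∑ q ∈ quads n with q.1.2 = q.2.2, ind3 (q.1.1 + q.2.1) := by
  have hlt : ∑ q ∈ quads n with q.1.2 < q.2.2, ind3 (q.1.1 + q.2.1) =
      ∑ q ∈ quads n with q.2.1 < q.1.1, ind3 q.1.1 := by
    rw [← sum_liouville_bijection n (fun q => ind3 (q.1.1 + q.2.1))]
    refine sum_congr rfl fun q hq => ?_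
    simp only [mem_filter] at hq
    dsimp only
    rw [Nat.sub_add_cancel hq.2.le]
  have hgt : ∑ q ∈ quads n with q.2.2 < q.1.2, ind3 (q.1.1 + q.2.1) =
      ∑ q ∈ quads n with q.2.1 < q.1.1, ind3 q.1.1 := by
    rw [sum_filter_comp_involutive Prod.swap_swap (fun _ => swap_mem_quads), ← hlt]
    simp only [Prod.fst_swap, Prod.snd_swap, add_comm]
  rw [← sum_filter_lt_add_sum_filter_eq_add_sum_filter_gt _ (fun q => q.1.2) (fun q => q.2.2),
    hlt, hgt]
  ring

lemma sum_quads_filter_snd_lt_fst_ind3 :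
    ∑ q ∈ quads n with q.2.1 < q.1.1, ind3 q.1.1 =
      ∑ q ∈ quads n with q.1.2 < q.2.2, ind3 q.1.1 + ∑ q ∈ quads n with q.1.2 = q.2.2, ind3 q.1.1 -
        ∑ q ∈ quads n with q.1.1 = q.2.1, ind3 q.1.1 := by
  have hlt : ∑ q ∈ quads n with q.1.1 < q.2.1, ind3 q.1.1 =
      ∑ q ∈ quads n with q.2.2 < q.1.2, ind3 q.1.1 := by
    rw [sum_filter_comp_involutive Prod.swap_swap (fun _ => swap_mem_quads)]
    simp only [Prod.fst_swap, Prod.snd_swap]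
    refine (sum_liouville_bijection n (fun q => ind3 q.2.1)).trans ?_
    rw [sum_filter_comp_involutive Prod.swap_swap (fun _ => swap_mem_quads)]
    simp only [Prod.fst_swap, Prod.snd_swap]
  have hsplit_ab := sum_filter_lt_add_sum_filter_eq_add_sum_filter_gt (quads n)
    (fun q => q.1.1) (fun q => q.2.1) (fun q => ind3 q.1.1)
  have hsplit_xy := sum_filter_lt_add_sum_filter_eq_add_sum_filter_gt (quads n)
    (fun q => q.1.2) (fun q => q.2.2) (fun q => ind3 q.1.1)
  linarith

end Liouville

lemma sum_quads_kroneckerNegThree_mul (n : ℕ) :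
    ∑ q ∈ quads n, kroneckerNegThree q.1.1 * kroneckerNegThree q.2.1 =
      ∑ d ∈ n.divisors, (((n / d - 1 : ℕ) : ℤ) - ind3 d * ((d - 1 : ℕ) : ℤ) +
        2 * ind3 d * ((n / d - 1 : ℕ) : ℤ) - 2 * (((d - 1) / 3 : ℕ) : ℤ)) := by
  simp only [kroneckerNegThree_mul, sum_sub_distrib, sum_add_distrib, mul_assoc, ← mul_sum]
  rw [sum_quads_ind3_add_two_mul, sum_quads_ind3_add, sum_quads_filter_snd_lt_fst_ind3,
    sum_quads_filter_fst_eq_snd_ind3_add_two_mul, sum_quads_filter_fst_eq_snd_ind3,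
    sum_quads_filter_snd_eq_snd_ind3_add, sum_quads_filter_snd_eq_snd_ind3]
  ring

lemma sum_divisors_ind3_mul (n : ℕ) (g : ℕ → ℤ) :
    ∑ d ∈ n.divisors, ind3 d * g d = if 3 ∣ n then ∑ e ∈ (n / 3).divisors, g (3 * e) else 0 := by
  simp only [ind3, ite_mul, one_mul, zero_mul, ← sum_filter]
  split_ifs with h3
  · obtain ⟨m, rfl⟩ := h3
    rw [Nat.mul_div_cancel_left m three_pos]
    refine sum_nbij' (· / 3) (3 * ·) ?_ ?_ ?_ ?_ ?_
    · simp only [mem_filter, Nat.mem_divisors, and_imp]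
      rintro _ hd hm ⟨t, rfl⟩
      exact ⟨by simpa using Nat.dvd_of_mul_dvd_mul_left three_pos hd, right_ne_zero_of_mul hm⟩
    · simp only [mem_filter, Nat.mem_divisors, and_imp]
      intro e he hm
      exact ⟨⟨mul_dvd_mul_left 3 he, mul_ne_zero three_ne_zero hm⟩, dvd_mul_right 3 e⟩
    · intro d hd
      exact Nat.mul_div_cancel' (mem_filter.1 hd).2
    · intro e _
      simp
    · intro d hd
      rw [Nat.mul_div_cancel' (mem_filter.1 hd).2]
  · refine sum_eq_zero fun d hd => absurd ?_ h3
    simp only [mem_filter, Nat.mem_divisors] at hd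
    exact hd.2.trans hd.1.1

lemma sum_divisors_ind3_mul_sub (n : ℕ) :
    ∑ d ∈ n.divisors, ind3 d * (3 * d - 6 * ((n / d : ℕ) : ℤ)) =
      3 * (if 3 ∣ n then sigma' (n / 3) else 0) := by
  rw [sum_divisors_ind3_mul]
  split_ifs
  · simp only [sum_sub_distrib, ← mul_sum, ← Nat.div_div_eq_div_mul, sigma']
    rw [Nat.sum_div_divisors (n / 3) (fun e => (e : ℤ))]
    push_cast
    rw [← mul_sum]
    ring
  · ring

lemma kroneckerNegThree_add_three_mul {n d : ℕ} (hd : d ∈ n.divisors) :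
    kroneckerNegThree d + 3 * (((n / d - 1 : ℕ) : ℤ) - ind3 d * ((d - 1 : ℕ) : ℤ) +
        2 * ind3 d * ((n / d - 1 : ℕ) : ℤ) - 2 * (((d - 1) / 3 : ℕ) : ℤ)) =
      3 * ((n / d : ℕ) : ℤ) - 2 * d - ind3 d * (3 * d - 6 * ((n / d : ℕ) : ℤ)) := by
  have hd0 := Nat.pos_of_mem_divisors hd
  have hnd : 1 ≤ n / d := Nat.div_pos (Nat.divisor_le hd) hd0
  rw [kroneckerNegThree_eq hd0, Nat.cast_sub hnd, Nat.cast_sub hd0]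
  push_cast
  ring

end ThetaSquareEisenstein

open ThetaSquareEisenstein in
theorem theta_square_eisenstein_general (n : ℕ) :
    RR n + 3 * ∑ k ∈ Finset.Ico 1 n, RR k * RR (n - k) =
      sigma' n - 3 * (if 3 ∣ n then sigma' (n / 3) else 0) := by
  unfold RR
  rw [sum_Ico_sum_divisors_mul_sum_divisors, sum_quads_kroneckerNegThree_mul, mul_sum,
    ← sum_add_distrib, sum_congr rfl fun d hd => kroneckerNegThree_add_three_mul hd,
    sum_sub_distrib, sum_sub_distrib, ← mul_sum, ← mul_sum, sum_divisors_ind3_mul_sub,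
    Nat.sum_div_divisors n (fun d => (d : ℤ))]
  unfold sigma'
  ring

/-- For every positive integer `n`,
`R(n) + 3·∑_{k=1}^{n−1} R(k)·R(n−k) = σ(n) − 3·σ₃(n)`, where `σ₃(n) = σ(n/3)` if `3 ∣ n`
and `σ₃(n) = 0` otherwise. -/
theorem theta_square_eisenstein (n : ℕ) (hn : 0 < n) :
    RR n + 3 * ∑ k ∈ Finset.Ico 1 n, RR k * RR (n - k) =
      sigma' n - 3 * (if 3 ∣ n then sigma' (n / 3) else 0) :=
  theta_square_eisenstein_general n
end

section
/- Let p be a prime with p ≡ 8 (mod 9). Let F be the field with p² elements, let t ∈ F satisfy t² = −3, let s ∈ F be the unique cube root of 3 lying in the prime subfield F_p, and let E be the elliptic curve y² + y = x³ over F. Let c ∈ E(F) be the point with affine coordinates (−(s²+3s+1)/4, (t·s² + 3·t·s + 5·t − 4)/8). Then there exists a point Q ∈ E(F) with 3·Q = c. -/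
set_option maxHeartbeats 4000000

private lemma some_eq_some {F : Type*} [Field F] {W : WeierstrassCurve.Affine F}
    {x₁ y₁ x₂ y₂ : F} (hx : x₁ = x₂) (hy : y₁ = y₂)
    (h₁ : W.Nonsingular x₁ y₁) (h₂ : W.Nonsingular x₂ y₂) :
    WeierstrassCurve.Affine.Point.some _ _ h₁ = WeierstrassCurve.Affine.Point.some _ _ h₂ := by
  subst hx; subst hy; rfl

private lemma key {F : Type*} [Field F] [DecidableEq F] (h2 : (2:F) ≠ 0) (h3 : (3:F) ≠ 0)
    (W : WeierstrassCurve.Affine F) (hW : W = ⟨0, 0, 1, 0, 0⟩)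
    (S t R : F) (hS3 : S ^ 3 = 3) (hT2 : t ^ 2 = -3)
    (hR3 : R ^ 3 = 52 + 36 * S + 25 * S ^ 2)
    (hc : W.Nonsingular (-(S ^ 2 + 3 * S + 1) / 4)
      ((t * S ^ 2 + 3 * t * S + 5 * t - 4) / 8)) :
    ∃ Q : W.Point, 3 • Q = WeierstrassCurve.Affine.Point.some _ _ hc := by
  have ha1 : W.a₁ = 0 := by rw [hW]
  have ha2 : W.a₂ = 0 := by rw [hW]
  have ha3 : W.a₃ = 1 := by rw [hW]
  have ha4 : W.a₄ = 0 := by rw [hW]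
  have ha6 : W.a₆ = 0 := by rw [hW]
  have h4 : (4:F) ≠ 0 := by
    have e : (4:F) = 2^2 := by norm_num
    rw [e]; exact pow_ne_zero _ h2
  have h8 : (8:F) ≠ 0 := by
    have e : (8:F) = 2^3 := by norm_num
    rw [e]; exact pow_ne_zero _ h2
  have h9 : (9:F) ≠ 0 := by
    have e : (9:F) = 3^2 := by norm_num
    rw [e]; exact pow_ne_zero _ h3
  have h27 : (27:F) ≠ 0 := by
    have e : (27:F) = 3^3 := by norm_num
    rw [e]; exact pow_ne_zero _ h3
  have h6 : (6:F) ≠ 0 := by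
    have e : (6:F) = 2*3 := by norm_num
    rw [e]; exact mul_ne_zero h2 h3
  have hi2 : (2:F) * (2:F)⁻¹ = 1 := mul_inv_cancel₀ h2
  have hi3 : (3:F) * (3:F)⁻¹ = 1 := mul_inv_cancel₀ h3
  have hi4 : (4:F) * (4:F)⁻¹ = 1 := mul_inv_cancel₀ h4
  have hi6 : (6:F) * (6:F)⁻¹ = 1 := mul_inv_cancel₀ h6
  have hi8 : (8:F) * (8:F)⁻¹ = 1 := mul_inv_cancel₀ h8
  have hy1' : (((9 + 6*S + 4*S^2 + (2 + 2*S)*R + (-2 + 2*S)*R^2)*t - 1)/2 : F) ≠ -(((9 + 6*S + 4*S^2 + (2 + 2*S)*R + (-2 + 2*S)*R^2)*t - 1)/2) - 1 := by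
    intro h
    refine one_ne_zero (α := F) (mul_left_cancel₀ h9 ?_)
    linear_combination ((-3)*t + 6*t*R + 6*t*R^2 + 2*S*t + 2*S*t*R + (-10)*S*t*R^2 + (-4)*S^2*t*R + 4*S^2*t*R^2) * h + (24 + 576*R + (-72)*R^2 + (-1284)*S*R + 48*S*R^2 + 600*S^2*R) * hS3 + (27 + (-48)*R + (-72)*R^2 + 12*R^4 + (-52)*S*R + 48*S*R^2 + (-32)*S*R^4 + (-4)*S^2*R + 28*S^2*R^4 + (-8)*S^3 + 16*S^3*R + 24*S^3*R^2 + (-8)*S^3*R^4 + 16*S^4*R + (-16)*S^4*R^2) * hT2 + ((-36)*R + 96*S*R + (-84)*S^2*R + 24*S^3*R) * hR3 + ((-3)*t + 6*t*R + 6*t*R^2 + 27*t^2 + (-48)*t^2*R + (-72)*t^2*R^2 + 12*t^2*R^4 + 2*S*t + 2*S*t*R + (-10)*S*t*R^2 + (-52)*S*t^2*R + 48*S*t^2*R^2 + (-32)*S*t^2*R^4 + (-4)*S^2*t*R + 4*S^2*t*R^2 + (-4)*S^2*t^2*R + 28*S^2*t^2*R^4 + (-8)*S^3*t^2 + 16*S^3*t^2*R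 + 24*S^3*t^2*R^2 + (-8)*S^3*t^2*R^4 + 16*S^4*t^2*R + (-16)*S^4*t^2*R^2) * hi2
  have hneg : W.negY (-2 - S - S^2 - R + (-1 + 2*S - S^2)*R^2) (((9 + 6*S + 4*S^2 + (2 + 2*S)*R + (-2 + 2*S)*R^2)*t - 1)/2) = -(((9 + 6*S + 4*S^2 + (2 + 2*S)*R + (-2 + 2*S)*R^2)*t - 1)/2) - 1 := by
    rw [WeierstrassCurve.Affine.negY, ha1, ha3]; ring
  have hy1 : (((9 + 6*S + 4*S^2 + (2 + 2*S)*R + (-2 + 2*S)*R^2)*t - 1)/2 : F) ≠ W.negY (-2 - S - S^2 - R + (-1 + 2*S - S^2)*R^2) (((9 + 6*S + 4*S^2 + (2 + 2*S)*R + (-2 + 2*S)*R^2)*t - 1)/2) := by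
    rw [hneg]; exact hy1'
  have hQ : W.Nonsingular (-2 - S - S^2 - R + (-1 + 2*S - S^2)*R^2) (((9 + 6*S + 4*S^2 + (2 + 2*S)*R + (-2 + 2*S)*R^2)*t - 1)/2) := by
    rw [WeierstrassCurve.Affine.nonsingular_iff']
    constructor
    · rw [WeierstrassCurve.Affine.equation_iff, ha1, ha2, ha3, ha4, ha6]
      apply mul_left_cancel₀ h4
      linear_combination ((-4852) + (-396)*R + (-264)*R^2 + 17068*S + 1212*S*R + 720*S*R^2 + (-29008)*S^2 + (-1044)*S^2*R + (-768)*S^2*R^2 + 25424*S^3 + 528*S^3*R + 312*S^3*R^2 + (-13028)*S^4 + (-468)*S^4*R + 9884*S^5 + 300*S^5*R + (-7800)*S^6 + 2500*S^7) * hS3 + (81 + 36*R + (-32)*R^2 + (-8)*R^3 + 4*R^4 + 108*S + 60*S*R + 20*S*R^2 + (-8)*S*R^4 + 108*S^2 + 40*S^2*R + 12*S^2*R^2 + 8*S^2*R^3 + 4*S^2*R^4 + 48*S^3 + 16*S^3*R + 16*S^3*R^2 + 16*S^4) * hT2 + (284 + 24*R + 12*R^2 + 4*R^3 + (-1176)*S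 + (-84)*S*R + (-48)*S*R^2 + (-24)*S*R^3 + 2356*S^2 + 108*S^2*R + 72*S^2*R^2 + 60*S^2*R^3 + (-2624)*S^3 + (-72)*S^3*R + (-48)*S^3*R^2 + (-80)*S^3*R^3 + 1764*S^4 + 48*S^4*R + 12*S^4*R^2 + 60*S^4*R^3 + (-1088)*S^5 + (-36)*S^5*R + (-24)*S^5*R^3 + 844*S^6 + 12*S^6*R + 4*S^6*R^3 + (-456)*S^7 + 100*S^8) * hR3 + ((-1) + 2*(2:F)⁻¹ + (-36)*t*(2:F)⁻¹ + (-8)*t*R*(2:F)⁻¹ + 8*t*R^2*(2:F)⁻¹ + 81*t^2 + 162*t^2*(2:F)⁻¹ + 36*t^2*R + 72*t^2*R*(2:F)⁻¹ + (-32)*t^2*R^2 + (-64)*t^2*R^2*(2:F)⁻¹ + (-8)*t^2*R^3 + (-16)*t^2*R^3*(2:F)⁻¹ + 4*t^2*R^4 + 8*t^2*R^4*(2:F)⁻¹ + (-24)*S*t*(2:F)⁻¹ + (-8)*S*t*R*(2:F)⁻¹ + (-8)*S*t*R^2*(2:F)⁻¹ + 108*S*t^2 + 216*S*t^2*(2:F)⁻¹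 + 60*S*t^2*R + 120*S*t^2*R*(2:F)⁻¹ + 20*S*t^2*R^2 + 40*S*t^2*R^2*(2:F)⁻¹ + (-8)*S*t^2*R^4 + (-16)*S*t^2*R^4*(2:F)⁻¹ + (-16)*S^2*t*(2:F)⁻¹ + 108*S^2*t^2 + 216*S^2*t^2*(2:F)⁻¹ + 40*S^2*t^2*R + 80*S^2*t^2*R*(2:F)⁻¹ + 12*S^2*t^2*R^2 + 24*S^2*t^2*R^2*(2:F)⁻¹ + 8*S^2*t^2*R^3 + 16*S^2*t^2*R^3*(2:F)⁻¹ + 4*S^2*t^2*R^4 + 8*S^2*t^2*R^4*(2:F)⁻¹ + 48*S^3*t^2 + 96*S^3*t^2*(2:F)⁻¹ + 16*S^3*t^2*R + 32*S^3*t^2*R*(2:F)⁻¹ + 16*S^3*t^2*R^2 + 32*S^3*t^2*R^2*(2:F)⁻¹ + 16*S^4*t^2 + 32*S^4*t^2*(2:F)⁻¹) * hi2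
    · refine Or.inr ?_
      rw [ha1, ha3]
      intro h
      refine one_ne_zero (α := F) (mul_left_cancel₀ h9 ?_)
      linear_combination ((-3)*t + 6*t*R + 6*t*R^2 + 2*S*t + 2*S*t*R + (-10)*S*t*R^2 + (-4)*S^2*t*R + 4*S^2*t*R^2) * h + (24 + 576*R + (-72)*R^2 + (-1284)*S*R + 48*S*R^2 + 600*S^2*R) * hS3 + (27 + (-48)*R + (-72)*R^2 + 12*R^4 + (-52)*S*R + 48*S*R^2 + (-32)*S*R^4 + (-4)*S^2*R + 28*S^2*R^4 + (-8)*S^3 + 16*S^3*R + 24*S^3*R^2 + (-8)*S^3*R^4 + 16*S^4*R + (-16)*S^4*R^2) * hT2 + ((-36)*R + 96*S*R + (-84)*S^2*R + 24*S^3*R) * hR3 + ((-3)*t + 6*t*R + 6*t*R^2 + 27*t^2 + (-48)*t^2*R + (-72)*t^2*R^2 + 12*t^2*R^4 + 2*S*t + 2*S*t*R + (-10)*S*t*R^2 + (-52)*S*t^2*R + 48*S*t^2*R^2 + (-32)*S*t^2*R^4 + (-4)*S^2*t*R + 4*S^2*t*R^2 + (-4)*S^2*t^2*R + 28*S^2*t^2*R^4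 + (-8)*S^3*t^2 + 16*S^3*t^2*R + 24*S^3*t^2*R^2 + (-8)*S^3*t^2*R^4 + 16*S^4*t^2*R + (-16)*S^4*t^2*R^2) * hi2
  have hsl1 : W.slope (-2 - S - S^2 - R + (-1 + 2*S - S^2)*R^2) (-2 - S - S^2 - R + (-1 + 2*S - S^2)*R^2) (((9 + 6*S + 4*S^2 + (2 + 2*S)*R + (-2 + 2*S)*R^2)*t - 1)/2) (((9 + 6*S + 4*S^2 + (2 + 2*S)*R + (-2 + 2*S)*R^2)*t - 1)/2) = (t*(3*R - 3*R^2 - S - 4*S*R + 2*S*R^2 - S^2 + S^2*R)/3) := by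
    rw [WeierstrassCurve.Affine.slope_of_Y_ne rfl hy1, hneg, ha1, ha2, ha4,
      div_eq_iff (sub_ne_zero_of_ne hy1')]
    apply mul_left_cancel₀ h3
    linear_combination (300 + (-507)*R + 6*R^2 + 213*S + 834*S*R + 18*S*R^2 + 150*S^2 + (-576)*S^2*R + 225*S^3*R) * hS3 + ((-27)*R + 21*R^2 + 12*R^3 + (-6)*R^4 + 9*S + 20*S*R + (-12)*S*R^3 + 10*S*R^4 + 15*S^2 + 7*S^2*R + 6*S^2*R^2 + 6*S^2*R^3 + (-4)*S^2*R^4 + 10*S^3 + 12*S^3*R + (-8)*S^3*R^2 + (-2)*S^3*R^3 + 4*S^4 + (-4)*S^4*R) * hT2 + ((-18) + 27*R + (-66)*S*R + 66*S^2*R + 6*S^3 + (-36)*S^3*R + 9*S^4*R) * hR3 + (3*t*R + (-3)*t*R^2 + (-27)*t^2*R + 21*t^2*R^2 + 12*t^2*R^3 + (-6)*t^2*R^4 + (-1)*S*t + (-4)*S*t*R + 2*S*t*R^2 + 9*S*t^2 + 20*S*t^2*R + (-12)*S*t^2*R^3 + 10*S*t^2*R^4 + (-1)*S^2*t + S^2*t*R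 + 15*S^2*t^2 + 7*S^2*t^2*R + 6*S^2*t^2*R^2 + 6*S^2*t^2*R^3 + (-4)*S^2*t^2*R^4 + 10*S^3*t^2 + 12*S^3*t^2*R + (-8)*S^3*t^2*R^2 + (-2)*S^3*t^2*R^3 + 4*S^4*t^2 + (-4)*S^4*t^2*R) * hi2 + ((-3)*t*R + 6*t*R*(2:F)⁻¹ + 3*t*R^2 + (-6)*t*R^2*(2:F)⁻¹ + (-54)*t^2*R*(2:F)⁻¹ + 42*t^2*R^2*(2:F)⁻¹ + 24*t^2*R^3*(2:F)⁻¹ + (-12)*t^2*R^4*(2:F)⁻¹ + S*t + (-2)*S*t*(2:F)⁻¹ + 4*S*t*R + (-8)*S*t*R*(2:F)⁻¹ + (-2)*S*t*R^2 + 4*S*t*R^2*(2:F)⁻¹ + 18*S*t^2*(2:F)⁻¹ + 40*S*t^2*R*(2:F)⁻¹ + (-24)*S*t^2*R^3*(2:F)⁻¹ + 20*S*t^2*R^4*(2:F)⁻¹ + S^2*t + (-2)*S^2*t*(2:F)⁻¹ + (-1)*S^2*t*R + 2*S^2*t*R*(2:F)⁻¹ + 30*S^2*t^2*(2:F)⁻¹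 + 14*S^2*t^2*R*(2:F)⁻¹ + 12*S^2*t^2*R^2*(2:F)⁻¹ + 12*S^2*t^2*R^3*(2:F)⁻¹ + (-8)*S^2*t^2*R^4*(2:F)⁻¹ + 20*S^3*t^2*(2:F)⁻¹ + 24*S^3*t^2*R*(2:F)⁻¹ + (-16)*S^3*t^2*R^2*(2:F)⁻¹ + (-4)*S^3*t^2*R^3*(2:F)⁻¹ + 8*S^4*t^2*(2:F)⁻¹ + (-8)*S^4*t^2*R*(2:F)⁻¹) * hi3
  have hX2 : W.addX (-2 - S - S^2 - R + (-1 + 2*S - S^2)*R^2) (-2 - S - S^2 - R + (-1 + 2*S - S^2)*R^2) (W.slope (-2 - S - S^2 - R + (-1 + 2*S - S^2)*R^2) (-2 - S - S^2 - R + (-1 + 2*S - S^2)*R^2) (((9 + 6*S + 4*S^2 + (2 + 2*S)*R + (-2 + 2*S)*R^2)*t - 1)/2) (((9 + 6*S + 4*S^2 + (2 + 2*S)*R + (-2 + 2*S)*R^2)*t - 1)/2)) = (-2 - S + S^2 + (-4 + 4*S - S^2)*R + (11 + S - 6*S^2)*R^2) := by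
    rw [hsl1, WeierstrassCurve.Affine.addX, ha1, ha2]
    apply mul_left_cancel₀ h9
    linear_combination ((-954) + 450*R + 36*R^2 + 1215*S + (-294)*S*R + (-3)*S*R^2 + (-300)*S^2) * hS3 + (9*R^2 + (-18)*R^3 + 9*R^4 + (-6)*S*R + (-18)*S*R^2 + 36*S*R^3 + (-12)*S*R^4 + S^2 + 2*S^2*R + 24*S^2*R^2 + (-22)*S^2*R^3 + 4*S^2*R^4 + 2*S^3 + 6*S^3*R + (-12)*S^3*R^2 + 4*S^3*R^3 + S^4 + (-2)*S^4*R + S^4*R^2) * hT2 + (54 + (-27)*R + (-108)*S + 36*S*R + 66*S^2 + (-12)*S^2*R + (-12)*S^3) * hR3 + (9*t^2*R^2 + 27*t^2*R^2*(3:F)⁻¹ + (-18)*t^2*R^3 + (-54)*t^2*R^3*(3:F)⁻¹ + 9*t^2*R^4 + 27*t^2*R^4*(3:F)⁻¹ + (-6)*S*t^2*R + (-18)*S*t^2*R*(3:F)⁻¹ + (-18)*S*t^2*R^2 + (-54)*S*t^2*R^2*(3:F)⁻¹ + 36*S*t^2*R^3 + 108*S*t^2*R^3*(3:F)⁻¹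 + (-12)*S*t^2*R^4 + (-36)*S*t^2*R^4*(3:F)⁻¹ + S^2*t^2 + 3*S^2*t^2*(3:F)⁻¹ + 2*S^2*t^2*R + 6*S^2*t^2*R*(3:F)⁻¹ + 24*S^2*t^2*R^2 + 72*S^2*t^2*R^2*(3:F)⁻¹ + (-22)*S^2*t^2*R^3 + (-66)*S^2*t^2*R^3*(3:F)⁻¹ + 4*S^2*t^2*R^4 + 12*S^2*t^2*R^4*(3:F)⁻¹ + 2*S^3*t^2 + 6*S^3*t^2*(3:F)⁻¹ + 6*S^3*t^2*R + 18*S^3*t^2*R*(3:F)⁻¹ + (-12)*S^3*t^2*R^2 + (-36)*S^3*t^2*R^2*(3:F)⁻¹ + 4*S^3*t^2*R^3 + 12*S^3*t^2*R^3*(3:F)⁻¹ + S^4*t^2 + 3*S^4*t^2*(3:F)⁻¹ + (-2)*S^4*t^2*R + (-6)*S^4*t^2*R*(3:F)⁻¹ + S^4*t^2*R^2 + 3*S^4*t^2*R^2*(3:F)⁻¹) * hi3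
  have hY2 : W.addY (-2 - S - S^2 - R + (-1 + 2*S - S^2)*R^2) (-2 - S - S^2 - R + (-1 + 2*S - S^2)*R^2) (((9 + 6*S + 4*S^2 + (2 + 2*S)*R + (-2 + 2*S)*R^2)*t - 1)/2) (W.slope (-2 - S - S^2 - R + (-1 + 2*S - S^2)*R^2) (-2 - S - S^2 - R + (-1 + 2*S - S^2)*R^2) (((9 + 6*S + 4*S^2 + (2 + 2*S)*R + (-2 + 2*S)*R^2)*t - 1)/2) (((9 + 6*S + 4*S^2 + (2 + 2*S)*R + (-2 + 2*S)*R^2)*t - 1)/2)) = ((3 + 6*S - 4*S^2 + (22 - 12*S - 2*S^2)*R + (-28 - 18*S + 26*S^2)*R^2)*t - 1)/2 := by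
    rw [hsl1, WeierstrassCurve.Affine.addY, WeierstrassCurve.Affine.negAddY,
      WeierstrassCurve.Affine.negY, WeierstrassCurve.Affine.addX, ha1, ha2, ha3]
    apply mul_left_cancel₀ h27
    linear_combination (71658*t + 2970*t*R + (-4374)*t*R^2 + (-46800)*S*t + (-7047)*S*t*R + 8235*S*t*R^2 + (-1458)*S^2*t + 9216*S^2*t*R + (-4923)*S^2*t*R^2 + (-19089)*S^3*t + (-4518)*S^3*t*R + 891*S^3*t*R^2 + 13308*S^4*t + 450*S^4*t*R + 75*S^5*t) * hS3 + ((-27)*t*R^3 + 81*t*R^4 + (-81)*t*R^5 + 27*t*R^6 + 27*S*t*R^2 + 54*S*t*R^3 + (-243)*S*t*R^4 + 216*S*t*R^5 + (-54)*S*t*R^6 + (-9)*S^2*t*R + (-36)*S^2*t*R^2 + (-117)*S^2*t*R^3 + 333*S^2*t*R^4 + (-207)*S^2*t*R^5 + 36*S^2*t*R^6 + S^3*t + (-6)*S^3*t*R + 6*S^3*t*R^2 + 178*S^3*t*R^3 + (-228)*S^3*t*R^4 + 84*S^3*t*R^5 + (-8)*S^3*t*R^6 + 3*S^4*t + 12*S^4*t*R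 + 39*S^4*t*R^2 + (-111)*S^4*t*R^3 + 69*S^4*t*R^4 + (-12)*S^4*t*R^5 + 3*S^5*t + 6*S^5*t*R + (-27)*S^5*t*R^2 + 24*S^5*t*R^3 + (-6)*S^5*t*R^4 + S^6*t + (-3)*S^6*t*R + 3*S^6*t*R^2 + (-1)*S^6*t*R^3) * hT2 + ((-4131)*t + (-162)*t*R + 243*t*R^2 + (-81)*t*R^3 + 5562*S*t + 513*S*t*R + (-648)*S*t*R^2 + 162*S*t*R^3 + (-1782)*S^2*t + (-810)*S^2*t*R + 621*S^2*t*R^2 + (-108)*S^2*t*R^3 + 1038*S^3*t + 630*S^3*t*R + (-252)*S^3*t*R^2 + 24*S^3*t*R^3 + (-1530)*S^4*t + (-207)*S^4*t*R + 36*S^4*t*R^2 + 528*S^5*t + 18*S^5*t*R + 3*S^6*t) * hR3 + (27 + (-162)*t + (-324)*t*R + 405*t*R^2 + (-162)*S*t + 135*S*t*R + 216*S*t*R^2 + 27*S^2*t*R + (-351)*S^2*t*R^2) * hi2 + ((-162)*t*R + 81*t*R^2 + 81*t*R^4 + (-27)*t^3*R^3 + (-81)*t^3*R^3*(3:F)⁻¹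 + (-243)*t^3*R^3*(3:F)⁻¹^2 + 81*t^3*R^4 + 243*t^3*R^4*(3:F)⁻¹ + 729*t^3*R^4*(3:F)⁻¹^2 + (-81)*t^3*R^5 + (-243)*t^3*R^5*(3:F)⁻¹ + (-729)*t^3*R^5*(3:F)⁻¹^2 + 27*t^3*R^6 + 81*t^3*R^6*(3:F)⁻¹ + 243*t^3*R^6*(3:F)⁻¹^2 + 54*S*t + 162*S*t*R + 108*S*t*R^2 + 216*S*t*R^3 + (-216)*S*t*R^4 + 27*S*t^3*R^2 + 81*S*t^3*R^2*(3:F)⁻¹ + 243*S*t^3*R^2*(3:F)⁻¹^2 + 54*S*t^3*R^3 + 162*S*t^3*R^3*(3:F)⁻¹ + 486*S*t^3*R^3*(3:F)⁻¹^2 + (-243)*S*t^3*R^4 + (-729)*S*t^3*R^4*(3:F)⁻¹ + (-2187)*S*t^3*R^4*(3:F)⁻¹^2 + 216*S*t^3*R^5 + 648*S*t^3*R^5*(3:F)⁻¹ + 1944*S*t^3*R^5*(3:F)⁻¹^2 + (-54)*S*t^3*R^6 + (-162)*S*t^3*R^6*(3:F)⁻¹ + (-486)*S*t^3*R^6*(3:F)⁻¹^2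 + 81*S^2*t + (-27)*S^2*t*R^2 + (-324)*S^2*t*R^3 + 189*S^2*t*R^4 + (-9)*S^2*t^3*R + (-27)*S^2*t^3*R*(3:F)⁻¹ + (-81)*S^2*t^3*R*(3:F)⁻¹^2 + (-36)*S^2*t^3*R^2 + (-108)*S^2*t^3*R^2*(3:F)⁻¹ + (-324)*S^2*t^3*R^2*(3:F)⁻¹^2 + (-117)*S^2*t^3*R^3 + (-351)*S^2*t^3*R^3*(3:F)⁻¹ + (-1053)*S^2*t^3*R^3*(3:F)⁻¹^2 + 333*S^2*t^3*R^4 + 999*S^2*t^3*R^4*(3:F)⁻¹ + 2997*S^2*t^3*R^4*(3:F)⁻¹^2 + (-207)*S^2*t^3*R^5 + (-621)*S^2*t^3*R^5*(3:F)⁻¹ + (-1863)*S^2*t^3*R^5*(3:F)⁻¹^2 + 36*S^2*t^3*R^6 + 108*S^2*t^3*R^6*(3:F)⁻¹ + 324*S^2*t^3*R^6*(3:F)⁻¹^2 + 54*S^3*t + 81*S^3*t*R + (-81)*S^3*t*R^2 + 162*S^3*t*R^3 + (-54)*S^3*t*R^4 + S^3*t^3 + 3*S^3*t^3*(3:F)⁻¹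 + 9*S^3*t^3*(3:F)⁻¹^2 + (-6)*S^3*t^3*R + (-18)*S^3*t^3*R*(3:F)⁻¹ + (-54)*S^3*t^3*R*(3:F)⁻¹^2 + 6*S^3*t^3*R^2 + 18*S^3*t^3*R^2*(3:F)⁻¹ + 54*S^3*t^3*R^2*(3:F)⁻¹^2 + 178*S^3*t^3*R^3 + 534*S^3*t^3*R^3*(3:F)⁻¹ + 1602*S^3*t^3*R^3*(3:F)⁻¹^2 + (-228)*S^3*t^3*R^4 + (-684)*S^3*t^3*R^4*(3:F)⁻¹ + (-2052)*S^3*t^3*R^4*(3:F)⁻¹^2 + 84*S^3*t^3*R^5 + 252*S^3*t^3*R^5*(3:F)⁻¹ + 756*S^3*t^3*R^5*(3:F)⁻¹^2 + (-8)*S^3*t^3*R^6 + (-24)*S^3*t^3*R^6*(3:F)⁻¹ + (-72)*S^3*t^3*R^6*(3:F)⁻¹^2 + 27*S^4*t + (-27)*S^4*t*R + 27*S^4*t*R^2 + (-27)*S^4*t*R^3 + 3*S^4*t^3 + 9*S^4*t^3*(3:F)⁻¹ + 27*S^4*t^3*(3:F)⁻¹^2 + 12*S^4*t^3*R + 36*S^4*t^3*R*(3:F)⁻¹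 + 108*S^4*t^3*R*(3:F)⁻¹^2 + 39*S^4*t^3*R^2 + 117*S^4*t^3*R^2*(3:F)⁻¹ + 351*S^4*t^3*R^2*(3:F)⁻¹^2 + (-111)*S^4*t^3*R^3 + (-333)*S^4*t^3*R^3*(3:F)⁻¹ + (-999)*S^4*t^3*R^3*(3:F)⁻¹^2 + 69*S^4*t^3*R^4 + 207*S^4*t^3*R^4*(3:F)⁻¹ + 621*S^4*t^3*R^4*(3:F)⁻¹^2 + (-12)*S^4*t^3*R^5 + (-36)*S^4*t^3*R^5*(3:F)⁻¹ + (-108)*S^4*t^3*R^5*(3:F)⁻¹^2 + 3*S^5*t^3 + 9*S^5*t^3*(3:F)⁻¹ + 27*S^5*t^3*(3:F)⁻¹^2 + 6*S^5*t^3*R + 18*S^5*t^3*R*(3:F)⁻¹ + 54*S^5*t^3*R*(3:F)⁻¹^2 + (-27)*S^5*t^3*R^2 + (-81)*S^5*t^3*R^2*(3:F)⁻¹ + (-243)*S^5*t^3*R^2*(3:F)⁻¹^2 + 24*S^5*t^3*R^3 + 72*S^5*t^3*R^3*(3:F)⁻¹ + 216*S^5*t^3*R^3*(3:F)⁻¹^2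 + (-6)*S^5*t^3*R^4 + (-18)*S^5*t^3*R^4*(3:F)⁻¹ + (-54)*S^5*t^3*R^4*(3:F)⁻¹^2 + S^6*t^3 + 3*S^6*t^3*(3:F)⁻¹ + 9*S^6*t^3*(3:F)⁻¹^2 + (-3)*S^6*t^3*R + (-9)*S^6*t^3*R*(3:F)⁻¹ + (-27)*S^6*t^3*R*(3:F)⁻¹^2 + 3*S^6*t^3*R^2 + 9*S^6*t^3*R^2*(3:F)⁻¹ + 27*S^6*t^3*R^2*(3:F)⁻¹^2 + (-1)*S^6*t^3*R^3 + (-3)*S^6*t^3*R^3*(3:F)⁻¹ + (-9)*S^6*t^3*R^3*(3:F)⁻¹^2) * hi3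
  have h2Q : W.Nonsingular ((-2 - S + S^2 + (-4 + 4*S - S^2)*R + (11 + S - 6*S^2)*R^2) : F) (((3 + 6*S - 4*S^2 + (22 - 12*S - 2*S^2)*R + (-28 - 18*S + 26*S^2)*R^2)*t - 1)/2 : F) := by
    have hn := W.nonsingular_add hQ hQ fun hxy => hy1 hxy.right
    rwa [hX2, hY2] at hn
  have e2 : WeierstrassCurve.Affine.Point.some _ _ hQ + WeierstrassCurve.Affine.Point.some _ _ hQ
      = WeierstrassCurve.Affine.Point.some _ _ h2Q := by
    rw [WeierstrassCurve.Affine.Point.add_self_of_Y_ne hy1]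
    exact some_eq_some hX2 hY2 _ _
  have hxx : ((-2 - S + S^2 + (-4 + 4*S - S^2)*R + (11 + S - 6*S^2)*R^2) : F) ≠ (-2 - S - S^2 - R + (-1 + 2*S - S^2)*R^2) := by
    intro h
    refine one_ne_zero (α := F) (mul_left_cancel₀ h6 ?_)
    linear_combination (1 + (-2)*R + 4*R^2 + S + 2*S*R + (-1)*S^2 + (-2)*S^2*R^2) * h + ((-626) + 831*R + 6*R^2 + 296*S + 507*S*R + (-1)*S*R^2 + 378*S^2 + (-410)*S^2*R + (-50)*S^3 + (-250)*S^3*R) * hS3 + (36 + (-48)*R + (-42)*S + 4*S*R + (-10)*S^2 + 44*S^2*R + 18*S^3 + (-2)*S^3*R + (-2)*S^4 + (-10)*S^4*R) * hR3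
  have hsl2 : W.slope (-2 - S + S^2 + (-4 + 4*S - S^2)*R + (11 + S - 6*S^2)*R^2) (-2 - S - S^2 - R + (-1 + 2*S - S^2)*R^2) (((3 + 6*S - 4*S^2 + (22 - 12*S - 2*S^2)*R + (-28 - 18*S + 26*S^2)*R^2)*t - 1)/2) (((9 + 6*S + 4*S^2 + (2 + 2*S)*R + (-2 + 2*S)*R^2)*t - 1)/2) = (t*(-3 - S + S^2 + (2*S - 2*S^2)*R + (18 - 4*S - 6*S^2)*R^2)/6) := by
    rw [WeierstrassCurve.Affine.slope_of_X_ne hxx,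
      div_eq_iff (sub_ne_zero_of_ne hxx)]
    apply mul_left_cancel₀ h6
    linear_combination ((-930)*t + 3727*t*R + 14*t*R^2 + 1224*S*t + 1459*S*t*R + 15*S*t*R^2 + 124*S^2*t + (-1730)*S^2*t*R + (-400)*S^3*t + (-750)*S^3*t*R) * hS3 + (54*t + (-216)*t*R + (-108)*S*t + 66*S*t*R + 42*S^2*t + 158*S^2*t*R + 28*S^3*t + (-26)*S^3*t*R + (-16)*S^4*t + (-30)*S^4*t*R) * hR3 + ((-18)*t + 60*t*R + (-78)*t*R^2 + (-42)*S*t*R + (-60)*S*t*R^2 + (-24)*S^2*t + (-6)*S^2*t*R + 78*S^2*t*R^2) * hi2 + ((-9)*t*R + 36*t*R^2 + 54*t*R^3 + (-216)*t*R^4 + 9*S*t*R + 15*S*t*R^2 + (-108)*S*t*R^3 + 66*S*t*R^4 + 6*S^2*t + 4*S^2*t*R + (-78)*S^2*t*R^2 + 42*S^2*t*R^3 + 158*S^2*t*R^4 + 2*S^3*t + (-9)*S^3*t*R + 14*S^3*t*R^2 + 28*S^3*t*R^3 + (-26)*S^3*t*R^4 + (-2)*S^4*t + 5*S^4*t*R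 + 15*S^4*t*R^2 + (-16)*S^4*t*R^3 + (-30)*S^4*t*R^4) * hi6
  have hX3 : W.addX (-2 - S + S^2 + (-4 + 4*S - S^2)*R + (11 + S - 6*S^2)*R^2) (-2 - S - S^2 - R + (-1 + 2*S - S^2)*R^2) (W.slope (-2 - S + S^2 + (-4 + 4*S - S^2)*R + (11 + S - 6*S^2)*R^2) (-2 - S - S^2 - R + (-1 + 2*S - S^2)*R^2) (((3 + 6*S - 4*S^2 + (22 - 12*S - 2*S^2)*R + (-28 - 18*S + 26*S^2)*R^2)*t - 1)/2) (((9 + 6*S + 4*S^2 + (2 + 2*S)*R + (-2 + 2*S)*R^2)*t - 1)/2))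
      = -(S ^ 2 + 3 * S + 1) / 4 := by
    rw [hsl2, WeierstrassCurve.Affine.addX, ha1, ha2, eq_div_iff h4]
    apply mul_left_cancel₀ h9
    linear_combination ((-42) + 16788*R + 12*R^2 + 3717*S + 4212*S*R + 24*S*R^2 + (-1992)*S^2 + (-7488)*S^2*R + (-1800)*S^3 + (-2700)*S^3*R) * hS3 + (9 + (-108)*R^2 + 324*R^4 + 6*S + (-12)*S*R + (-12)*S*R^2 + 72*S*R^3 + (-144)*S*R^4 + (-5)*S^2 + 8*S^2*R + 84*S^2*R^2 + (-88)*S^2*R^3 + (-200)*S^2*R^4 + (-2)*S^3 + 8*S^3*R + (-4)*S^3*R^2 + (-8)*S^3*R^3 + 48*S^3*R^4 + S^4 + (-4)*S^4*R + (-8)*S^4*R^2 + 24*S^4*R^3 + 36*S^4*R^4) * hT2 + ((-972)*R + (-216)*S + 432*S*R + 264*S^2 + 600*S^2*R + 24*S^3 + (-144)*S^3*R + (-72)*S^4 + (-108)*S^4*R) * hR3 + (9*t^2 + 54*t^2*(6:F)⁻¹ + (-108)*t^2*R^2 + (-648)*t^2*R^2*(6:F)⁻¹ + 324*t^2*R^4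 + 1944*t^2*R^4*(6:F)⁻¹ + 6*S*t^2 + 36*S*t^2*(6:F)⁻¹ + (-12)*S*t^2*R + (-72)*S*t^2*R*(6:F)⁻¹ + (-12)*S*t^2*R^2 + (-72)*S*t^2*R^2*(6:F)⁻¹ + 72*S*t^2*R^3 + 432*S*t^2*R^3*(6:F)⁻¹ + (-144)*S*t^2*R^4 + (-864)*S*t^2*R^4*(6:F)⁻¹ + (-5)*S^2*t^2 + (-30)*S^2*t^2*(6:F)⁻¹ + 8*S^2*t^2*R + 48*S^2*t^2*R*(6:F)⁻¹ + 84*S^2*t^2*R^2 + 504*S^2*t^2*R^2*(6:F)⁻¹ + (-88)*S^2*t^2*R^3 + (-528)*S^2*t^2*R^3*(6:F)⁻¹ + (-200)*S^2*t^2*R^4 + (-1200)*S^2*t^2*R^4*(6:F)⁻¹ + (-2)*S^3*t^2 + (-12)*S^3*t^2*(6:F)⁻¹ + 8*S^3*t^2*R + 48*S^3*t^2*R*(6:F)⁻¹ + (-4)*S^3*t^2*R^2 + (-24)*S^3*t^2*R^2*(6:F)⁻¹ + (-8)*S^3*t^2*R^3 + (-48)*S^3*t^2*R^3*(6:F)⁻¹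 + 48*S^3*t^2*R^4 + 288*S^3*t^2*R^4*(6:F)⁻¹ + S^4*t^2 + 6*S^4*t^2*(6:F)⁻¹ + (-4)*S^4*t^2*R + (-24)*S^4*t^2*R*(6:F)⁻¹ + (-8)*S^4*t^2*R^2 + (-48)*S^4*t^2*R^2*(6:F)⁻¹ + 24*S^4*t^2*R^3 + 144*S^4*t^2*R^3*(6:F)⁻¹ + 36*S^4*t^2*R^4 + 216*S^4*t^2*R^4*(6:F)⁻¹) * hi6
  have hY3 : W.addY (-2 - S + S^2 + (-4 + 4*S - S^2)*R + (11 + S - 6*S^2)*R^2) (-2 - S - S^2 - R + (-1 + 2*S - S^2)*R^2) (((3 + 6*S - 4*S^2 + (22 - 12*S - 2*S^2)*R + (-28 - 18*S + 26*S^2)*R^2)*t - 1)/2) (W.slope (-2 - S + S^2 + (-4 + 4*S - S^2)*R + (11 + S - 6*S^2)*R^2) (-2 - S - S^2 - R + (-1 + 2*S - S^2)*R^2) (((3 + 6*S - 4*S^2 + (22 - 12*S - 2*S^2)*R + (-28 - 18*S + 26*S^2)*R^2)*t - 1)/2) (((9 + 6*S + 4*S^2 + (2 + 2*S)*R + (-2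 + 2*S)*R^2)*t - 1)/2))
      = (t * S ^ 2 + 3 * t * S + 5 * t - 4) / 8 := by
    rw [hsl2, WeierstrassCurve.Affine.addY, WeierstrassCurve.Affine.negAddY,
      WeierstrassCurve.Affine.negY, WeierstrassCurve.Affine.addX, ha1, ha2, ha3,
      eq_div_iff h8]
    apply mul_left_cancel₀ h27
    linear_combination ((-15668676)*t + (-83772)*t*R + 558*t*R^2 + (-11356614)*S*t + (-67842)*S*t*R + (-100980)*S*t*R^2 + 5244615*S^2*t + 9810*S^2*t*R + 75636*S^2*t*R^2 + 11158323*S^3*t + 27954*S^3*t*R + 70110*S^3*t*R^2 + 4993584*S^4*t + 13788*S^4*t*R + (-28728)*S^4*t*R^2 + (-1747608)*S^5*t + 2700*S^5*t*R + (-16200)*S^5*t*R^2 + (-1976400)*S^6*t + (-405000)*S^7*t) * hS3 + (27*t + (-486)*t*R^2 + 2916*t*R^4 + (-5832)*t*R^6 + 27*S*t + (-54)*S*t*R + (-216)*S*t*R^2 + 648*S*t*R^3 + (-324)*S*t*R^4 + (-1944)*S*t*R^5 + 3888*S*t*R^6 + (-18)*S^2*t + 18*S^2*t*R + 540*S^2*t*R^2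 + (-576)*S^2*t*R^3 + (-3420)*S^2*t*R^4 + 2808*S^2*t*R^5 + 4968*S^2*t*R^6 + (-17)*S^3*t + 66*S^3*t*R + 96*S^3*t*R^2 + (-560)*S^3*t*R^3 + 744*S^3*t*R^4 + 336*S^3*t*R^5 + (-2528)*S^3*t*R^6 + 6*S^4*t + (-18)*S^4*t*R + (-168)*S^4*t*R^2 + 480*S^4*t*R^3 + 828*S^4*t*R^4 + (-1488)*S^4*t*R^5 + (-1656)*S^4*t*R^6 + 3*S^5*t + (-18)*S^5*t*R + 12*S^5*t*R^2 + 72*S^5*t*R^3 + (-132)*S^5*t*R^4 + 72*S^5*t*R^5 + 432*S^5*t*R^6 + (-1)*S^6*t + 6*S^6*t*R + 6*S^6*t*R^2 + (-64)*S^6*t*R^3 + (-36)*S^6*t*R^4 + 216*S^6*t*R^5 + 216*S^6*t*R^6) * hT2 + (903960*t + 4860*t*R + 17496*t*R^3 + 29376*S*t + 540*S*t*R + 5832*S*t*R^2 + (-11664)*S*t*R^3 + (-757512)*S^2*t + (-3276)*S^2*t*R + (-8424)*S^2*t*R^2 + (-14904)*S^2*t*R^3 + (-434760)*S^3*t + (-1224)*S^3*t*R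 + (-1008)*S^3*t*R^2 + 7584*S^3*t*R^3 + 158688*S^4*t + 324*S^4*t*R + 4464*S^4*t*R^2 + 4968*S^4*t*R^3 + 300840*S^5*t + 396*S^5*t*R + (-216)*S^5*t*R^2 + (-1296)*S^5*t*R^3 + 44040*S^6*t + 108*S^6*t*R + (-648)*S^6*t*R^2 + (-648)*S^6*t*R^3 + (-55728)*S^7*t + (-16200)*S^8*t) * hR3 + (108 + (-324)*t + (-2376)*t*R + 3024*t*R^2 + (-648)*S*t + 1296*S*t*R + 1944*S*t*R^2 + 432*S^2*t + 216*S^2*t*R + (-2808)*S^2*t*R^2) * hi2 + (648*t + 972*t*R + (-6156)*t*R^2 + (-5832)*t*R^3 + 13608*t*R^4 + 27*t^3 + 162*t^3*(6:F)⁻¹ + 972*t^3*(6:F)⁻¹^2 + (-486)*t^3*R^2 + (-2916)*t^3*R^2*(6:F)⁻¹ + (-17496)*t^3*R^2*(6:F)⁻¹^2 + 2916*t^3*R^4 + 17496*t^3*R^4*(6:F)⁻¹ + 104976*t^3*R^4*(6:F)⁻¹^2 + (-5832)*t^3*R^6 + (-34992)*t^3*R^6*(6:F)⁻¹ + (-209952)*t^3*R^6*(6:F)⁻¹^2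 + 540*S*t + (-972)*S*t*R + (-2916)*S*t*R^2 + 7992*S*t*R^3 + (-432)*S*t*R^4 + 27*S*t^3 + 162*S*t^3*(6:F)⁻¹ + 972*S*t^3*(6:F)⁻¹^2 + (-54)*S*t^3*R + (-324)*S*t^3*R*(6:F)⁻¹ + (-1944)*S*t^3*R*(6:F)⁻¹^2 + (-216)*S*t^3*R^2 + (-1296)*S*t^3*R^2*(6:F)⁻¹ + (-7776)*S*t^3*R^2*(6:F)⁻¹^2 + 648*S*t^3*R^3 + 3888*S*t^3*R^3*(6:F)⁻¹ + 23328*S*t^3*R^3*(6:F)⁻¹^2 + (-324)*S*t^3*R^4 + (-1944)*S*t^3*R^4*(6:F)⁻¹ + (-11664)*S*t^3*R^4*(6:F)⁻¹^2 + (-1944)*S*t^3*R^5 + (-11664)*S*t^3*R^5*(6:F)⁻¹ + (-69984)*S*t^3*R^5*(6:F)⁻¹^2 + 3888*S*t^3*R^6 + 23328*S*t^3*R^6*(6:F)⁻¹ + 139968*S*t^3*R^6*(6:F)⁻¹^2 + (-216)*S^2*t + (-180)*S^2*t*R + 5616*S^2*t*R^2 + (-1728)*S^2*t*R^3 + (-13536)*S^2*t*R^4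 + (-18)*S^2*t^3 + (-108)*S^2*t^3*(6:F)⁻¹ + (-648)*S^2*t^3*(6:F)⁻¹^2 + 18*S^2*t^3*R + 108*S^2*t^3*R*(6:F)⁻¹ + 648*S^2*t^3*R*(6:F)⁻¹^2 + 540*S^2*t^3*R^2 + 3240*S^2*t^3*R^2*(6:F)⁻¹ + 19440*S^2*t^3*R^2*(6:F)⁻¹^2 + (-576)*S^2*t^3*R^3 + (-3456)*S^2*t^3*R^3*(6:F)⁻¹ + (-20736)*S^2*t^3*R^3*(6:F)⁻¹^2 + (-3420)*S^2*t^3*R^4 + (-20520)*S^2*t^3*R^4*(6:F)⁻¹ + (-123120)*S^2*t^3*R^4*(6:F)⁻¹^2 + 2808*S^2*t^3*R^5 + 16848*S^2*t^3*R^5*(6:F)⁻¹ + 101088*S^2*t^3*R^5*(6:F)⁻¹^2 + 4968*S^2*t^3*R^6 + 29808*S^2*t^3*R^6*(6:F)⁻¹ + 178848*S^2*t^3*R^6*(6:F)⁻¹^2 + (-144)*S^3*t + 648*S^3*t*R + 396*S^3*t*R^2 + (-2664)*S^3*t*R^3 + 1008*S^3*t*R^4 + (-17)*S^3*t^3 +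 (-102)*S^3*t^3*(6:F)⁻¹ + (-612)*S^3*t^3*(6:F)⁻¹^2 + 66*S^3*t^3*R + 396*S^3*t^3*R*(6:F)⁻¹ + 2376*S^3*t^3*R*(6:F)⁻¹^2 + 96*S^3*t^3*R^2 + 576*S^3*t^3*R^2*(6:F)⁻¹ + 3456*S^3*t^3*R^2*(6:F)⁻¹^2 + (-560)*S^3*t^3*R^3 + (-3360)*S^3*t^3*R^3*(6:F)⁻¹ + (-20160)*S^3*t^3*R^3*(6:F)⁻¹^2 + 744*S^3*t^3*R^4 + 4464*S^3*t^3*R^4*(6:F)⁻¹ + 26784*S^3*t^3*R^4*(6:F)⁻¹^2 + 336*S^3*t^3*R^5 + 2016*S^3*t^3*R^5*(6:F)⁻¹ + 12096*S^3*t^3*R^5*(6:F)⁻¹^2 + (-2528)*S^3*t^3*R^6 + (-15168)*S^3*t^3*R^6*(6:F)⁻¹ + (-91008)*S^3*t^3*R^6*(6:F)⁻¹^2 + 36*S^4*t + (-144)*S^4*t*R + (-540)*S^4*t*R^2 + 1368*S^4*t*R^3 + 2808*S^4*t*R^4 + 6*S^4*t^3 + 36*S^4*t^3*(6:F)⁻¹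 + 216*S^4*t^3*(6:F)⁻¹^2 + (-18)*S^4*t^3*R + (-108)*S^4*t^3*R*(6:F)⁻¹ + (-648)*S^4*t^3*R*(6:F)⁻¹^2 + (-168)*S^4*t^3*R^2 + (-1008)*S^4*t^3*R^2*(6:F)⁻¹ + (-6048)*S^4*t^3*R^2*(6:F)⁻¹^2 + 480*S^4*t^3*R^3 + 2880*S^4*t^3*R^3*(6:F)⁻¹ + 17280*S^4*t^3*R^3*(6:F)⁻¹^2 + 828*S^4*t^3*R^4 + 4968*S^4*t^3*R^4*(6:F)⁻¹ + 29808*S^4*t^3*R^4*(6:F)⁻¹^2 + (-1488)*S^4*t^3*R^5 + (-8928)*S^4*t^3*R^5*(6:F)⁻¹ + (-53568)*S^4*t^3*R^5*(6:F)⁻¹^2 + (-1656)*S^4*t^3*R^6 + (-9936)*S^4*t^3*R^6*(6:F)⁻¹ + (-59616)*S^4*t^3*R^6*(6:F)⁻¹^2 + 3*S^5*t^3 + 18*S^5*t^3*(6:F)⁻¹ + 108*S^5*t^3*(6:F)⁻¹^2 + (-18)*S^5*t^3*R + (-108)*S^5*t^3*R*(6:F)⁻¹ + (-648)*S^5*t^3*R*(6:F)⁻¹^2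 + 12*S^5*t^3*R^2 + 72*S^5*t^3*R^2*(6:F)⁻¹ + 432*S^5*t^3*R^2*(6:F)⁻¹^2 + 72*S^5*t^3*R^3 + 432*S^5*t^3*R^3*(6:F)⁻¹ + 2592*S^5*t^3*R^3*(6:F)⁻¹^2 + (-132)*S^5*t^3*R^4 + (-792)*S^5*t^3*R^4*(6:F)⁻¹ + (-4752)*S^5*t^3*R^4*(6:F)⁻¹^2 + 72*S^5*t^3*R^5 + 432*S^5*t^3*R^5*(6:F)⁻¹ + 2592*S^5*t^3*R^5*(6:F)⁻¹^2 + 432*S^5*t^3*R^6 + 2592*S^5*t^3*R^6*(6:F)⁻¹ + 15552*S^5*t^3*R^6*(6:F)⁻¹^2 + (-1)*S^6*t^3 + (-6)*S^6*t^3*(6:F)⁻¹ + (-36)*S^6*t^3*(6:F)⁻¹^2 + 6*S^6*t^3*R + 36*S^6*t^3*R*(6:F)⁻¹ + 216*S^6*t^3*R*(6:F)⁻¹^2 + 6*S^6*t^3*R^2 + 36*S^6*t^3*R^2*(6:F)⁻¹ + 216*S^6*t^3*R^2*(6:F)⁻¹^2 + (-64)*S^6*t^3*R^3 + (-384)*S^6*t^3*R^3*(6:F)⁻¹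 + (-2304)*S^6*t^3*R^3*(6:F)⁻¹^2 + (-36)*S^6*t^3*R^4 + (-216)*S^6*t^3*R^4*(6:F)⁻¹ + (-1296)*S^6*t^3*R^4*(6:F)⁻¹^2 + 216*S^6*t^3*R^5 + 1296*S^6*t^3*R^5*(6:F)⁻¹ + 7776*S^6*t^3*R^5*(6:F)⁻¹^2 + 216*S^6*t^3*R^6 + 1296*S^6*t^3*R^6*(6:F)⁻¹ + 7776*S^6*t^3*R^6*(6:F)⁻¹^2) * hi6
  have e3 : WeierstrassCurve.Affine.Point.some _ _ h2Q + WeierstrassCurve.Affine.Point.some _ _ hQ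
      = WeierstrassCurve.Affine.Point.some _ _ hc := by
    rw [WeierstrassCurve.Affine.Point.add_of_X_ne hxx]
    exact some_eq_some hX3 hY3 _ hc
  refine ⟨WeierstrassCurve.Affine.Point.some _ _ hQ, ?_⟩
  have step : (3:ℕ) • WeierstrassCurve.Affine.Point.some _ _ hQ
      = 2 • WeierstrassCurve.Affine.Point.some _ _ hQ + WeierstrassCurve.Affine.Point.some _ _ hQ :=
    succ_nsmul _ 2
  rw [step, two_nsmul, e2, e3]

open Classical in
/-- Let `p` be a prime with `p ≡ 8 (mod 9)`.  Let `F = 𝔽_{p²}`, let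
`t ∈ F` satisfy `t² = −3`, let `s` be the unique cube root of `3` in the prime subfield
`𝔽_p`, and let `E : y² + y = x³` over `F` (the Weierstrass curve with `a₁ = a₂ = a₄ = a₆ = 0`
and `a₃ = 1`).  Let `c = (−(s²+3s+1)/4, (t·s² + 3·t·s + 5·t − 4)/8) ∈ E(F)`.  Then there
exists a point `Q ∈ E(F)` with `3·Q = c`. -/
theorem c_is_divisible_by_three (p : ℕ) [hp : Fact p.Prime] (hp8 : p % 9 = 8)
    (t : GaloisField p 2) (ht : t ^ 2 = -3)
    (s : ZMod p) (hs : s ^ 3 = 3)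
    (W : WeierstrassCurve.Affine (GaloisField p 2)) (hW : W = ⟨0, 0, 1, 0, 0⟩)
    (hc : W.Nonsingular
      (-((algebraMap (ZMod p) (GaloisField p 2) s) ^ 2 +
          3 * (algebraMap (ZMod p) (GaloisField p 2) s) + 1) / 4)
      ((t * (algebraMap (ZMod p) (GaloisField p 2) s) ^ 2 +
          3 * t * (algebraMap (ZMod p) (GaloisField p 2) s) + 5 * t - 4) / 8)) :
    ∃ Q : W.Point, 3 • Q = WeierstrassCurve.Affine.Point.some _ _ hc := by
  have hple : 8 ≤ p := by omega
  have h2 : (2 : GaloisField p 2) ≠ 0 := by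
    have e : ((2:ℕ) : GaloisField p 2) = (2 : GaloisField p 2) := by norm_cast
    rw [← e, Ne, CharP.cast_eq_zero_iff (GaloisField p 2) p]
    intro hdvd
    have := Nat.le_of_dvd (by norm_num) hdvd
    interval_cases p <;> omega
  have h3 : (3 : GaloisField p 2) ≠ 0 := by
    have e : ((3:ℕ) : GaloisField p 2) = (3 : GaloisField p 2) := by norm_cast
    rw [← e, Ne, CharP.cast_eq_zero_iff (GaloisField p 2) p]
    intro hdvd
    have := Nat.le_of_dvd (by norm_num) hdvd
    interval_cases p <;> omega
  -- cube roots exist in `ZMod p`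
  have hcube : ∀ u : ZMod p, ∃ r : ZMod p, r ^ 3 = u := by
    intro u
    rcases eq_or_ne u 0 with h0 | h0
    · exact ⟨0, by rw [h0]; simp⟩
    · have hcop : (Nat.card (ZMod p)ˣ).Coprime 3 := by
        rw [Nat.card_eq_fintype_card, ZMod.card_units]
        exact ((Nat.Prime.coprime_iff_not_dvd (by norm_num)).mpr (by omega)).symm
      obtain ⟨w, hw⟩ := (Nat.Coprime.pow_left_bijective hcop).surjective (Units.mk0 u h0)
      refine ⟨(w : ZMod p), ?_⟩
      have := congrArg (Units.val) hw
      rwa [Units.val_pow_eq_pow_val, Units.val_mk0] at this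
  obtain ⟨r0, hr0⟩ := hcube (52 + 36 * s + 25 * s ^ 2)
  have hS3 : (algebraMap (ZMod p) (GaloisField p 2) s) ^ 3 = 3 := by
    rw [← map_pow, hs, map_ofNat]
  have hR3 : (algebraMap (ZMod p) (GaloisField p 2) r0) ^ 3
      = 52 + 36 * (algebraMap (ZMod p) (GaloisField p 2) s)
        + 25 * (algebraMap (ZMod p) (GaloisField p 2) s) ^ 2 := by
    rw [← map_pow, hr0]
    simp [map_add, map_mul, map_pow, map_ofNat]
  exact key h2 h3 W hW (algebraMap (ZMod p) (GaloisField p 2) s) t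
    (algebraMap (ZMod p) (GaloisField p 2) r0) hS3 ht hR3 hc
end
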